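/- arXiv:1703.03857 — 4 statements merged into one kernel-verified Lean document; each statement's English description precedes it below -/
import Mathlib

section
/- (i) For every fixed x > 0, the map τ ↦ ω°_{τ,x} is strictly increasing on (τ_e(x), +∞), with ω°_{τ,x} → 0 as τ → τ_e(x)⁺ and ω°_{τ,x} → W°_x as τ → +∞. (ii) For every fixed τ > 0, if 0 < x < x′ and τ_e(x′) < τ, then ω°_{τ,x′} < ω°_{τ,x}; moreover ω°_{τ,x} → 0 as x → x_e(τ)⁻, where x_e(τ) is the unique solution x_e of τ_e(x_e) = τ. -/
open MeasureTheory Filter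

/-- `φ_n(w) = Σ_{k≥1} k^n w^k/(1-q^k)` as a real function. -/
noncomputable def phiR (q : ℝ) (n : ℕ) (w : ℝ) : ℝ :=
  ∑' k : ℕ, ((k : ℝ) + 1) ^ n * w ^ (k + 1) / (1 - q ^ (k + 1))

/-- `Φ_n(w∣x) = ∫₀ˣ φ_n(w/ξ(y)) dy`. -/
noncomputable def PhiI (q : ℝ) (n : ℕ) (ξ : ℝ → ℝ) (x w : ℝ) : ℝ :=
  ∫ y in Set.Ioo 0 x, phiR q n (w / ξ y)

/-- `τ_e(x) = ∫₀ˣ dy/((1-q)ξ(y))`. -/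
noncomputable def tauE (q : ℝ) (ξ : ℝ → ℝ) (x : ℝ) : ℝ :=
  ∫ y in Set.Ioo 0 x, 1 / ((1 - q) * ξ y)

/-!
Write `g_x(w) = Φ₂(w∣x) / w`. Since `φ₂(u) / u` is a power series with nonnegative
coefficients, `g_x` is nondecreasing on `(0, W°_x)`, and `ω°_{τ,x}` is the point where `g_x`
takes the value `τ`; so comparing `τ` with `g_x(ε)` places `ω°_{τ,x}` relative to `ε`.
The first two terms of `φ₂` give `g_x(w) ≥ τ_e(x) + x w / M²`, which pushes `ω°_{τ,x}` to `0`
as `τ ↓ τ_e(x)`, and also as `x ↑ x_e(τ)` because `τ_e(x_e) - τ_e(x) ≤ (x_e - x) / ((1 - q) m)`.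
Enlarging `x` strictly increases `Φ₂(w∣x)`, which lowers the root.
-/

open Set Topology

section Series

variable {q u v : ℝ}

lemma one_sub_pow_succ_pos (hq : q ∈ Ioo 0 1) (k : ℕ) : 0 < 1 - q ^ (k + 1) :=
  sub_pos.2 (pow_lt_one₀ hq.1.le hq.2 k.succ_ne_zero)

lemma summable_phiR_term (hq : q ∈ Ioo 0 1) (hu : 0 ≤ u) (hu1 : u < 1) (n : ℕ) :
    Summable fun k : ℕ => ((k : ℝ) + 1) ^ n * u ^ (k + 1) / (1 - q ^ (k + 1)) := by
  have hgeom : Summable fun k : ℕ => ((k : ℝ) + 1) ^ n * u ^ (k + 1) := by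
    have h := summable_pow_mul_geometric_of_norm_lt_one n (by rwa [Real.norm_of_nonneg hu])
    simpa using (summable_nat_add_iff 1).2 h
  refine (hgeom.div_const (1 - q)).of_nonneg_of_le
    (fun k => div_nonneg (by positivity) (one_sub_pow_succ_pos hq k).le) fun k => ?_
  have hqk : q ^ (k + 1) ≤ q := pow_le_of_le_one hq.1.le hq.2.le k.succ_ne_zero
  gcongr
  exact sub_pos.2 hq.2

lemma phiR_nonneg (hq : q ∈ Ioo 0 1) (hu : 0 ≤ u) (n : ℕ) : 0 ≤ phiR q n u :=
  tsum_nonneg fun k => div_nonneg (by positivity) (one_sub_pow_succ_pos hq k).le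

lemma phiR_le_phiR (hq : q ∈ Ioo 0 1) (hu : 0 ≤ u) (huv : u ≤ v) (hv : v < 1) (n : ℕ) :
    phiR q n u ≤ phiR q n v := by
  refine (summable_phiR_term hq hu (huv.trans_lt hv) n).tsum_le_tsum (fun k => ?_)
    (summable_phiR_term hq (hu.trans huv) hv n)
  have := one_sub_pow_succ_pos hq k
  gcongr

lemma phiR_mul_le_mul_phiR (hq : q ∈ Ioo 0 1) (hu : 0 ≤ u) (huv : u ≤ v) (hv : v < 1)
    (n : ℕ) : phiR q n u * v ≤ phiR q n v * u := by
  simp only [phiR, ← tsum_mul_right]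
  refine ((summable_phiR_term hq hu (huv.trans_lt hv) n).mul_right v).tsum_le_tsum
    (fun k => ?_) ((summable_phiR_term hq (hu.trans huv) hv n).mul_right u)
  have hpow : u ^ (k + 1) * v ≤ v ^ (k + 1) * u := by
    rw [pow_succ, pow_succ, mul_assoc, mul_assoc, mul_comm u v]
    have : 0 ≤ v * u := mul_nonneg (hu.trans huv) hu
    gcongr
  have := one_sub_pow_succ_pos hq k
  rw [div_mul_eq_mul_div, div_mul_eq_mul_div, mul_assoc, mul_assoc]
  gcongr

lemma div_one_sub_add_sq_le_phiR_two (hq : q ∈ Ioo 0 1) (hu : 0 ≤ u) (hu1 : u < 1) :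
    u / (1 - q) + u ^ 2 ≤ phiR q 2 u := by
  have hfirst := (summable_phiR_term hq hu hu1 2).sum_le_tsum (Finset.range 2)
    fun k _ => div_nonneg (by positivity) (one_sub_pow_succ_pos hq k).le
  have hq2 : 0 < 1 - q ^ 2 := one_sub_pow_succ_pos hq 1
  have hsq : u ^ 2 ≤ 4 * u ^ 2 / (1 - q ^ 2) := by
    rw [le_div_iff₀ hq2]; nlinarith [sq_nonneg u, sq_nonneg q]
  norm_num [Finset.sum_range_succ] at hfirst
  unfold phiR
  linarith

end Series

section SetIntegral

variable {α : Type*} [MeasurableSpace α] {μ : Measure α} {s : Set α} {f : α → ℝ} {c : ℝ}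

lemma const_mul_measureReal_le_setIntegral (hs : μ s ≠ ⊤) (hf : IntegrableOn f s μ)
    (hc : ∀ᵐ y ∂μ.restrict s, c ≤ f y) : c * μ.real s ≤ ∫ y in s, f y ∂μ := by
  rw [mul_comm, ← smul_eq_mul, ← setIntegral_const]
  exact integral_mono_ae (integrableOn_const hs) hf hc

lemma setIntegral_le_const_mul_measureReal (hs : μ s ≠ ⊤) (hf : IntegrableOn f s μ)
    (hc : ∀ᵐ y ∂μ.restrict s, f y ≤ c) : ∫ y in s, f y ∂μ ≤ c * μ.real s := by
  rw [mul_comm, ← smul_eq_mul, ← setIntegral_const]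
  exact integral_mono_ae hf (integrableOn_const hs) hc

end SetIntegral

lemma setIntegral_Ioo_eq_add_Ico {f : ℝ → ℝ} {x x' : ℝ} (hx : 0 < x) (hxx' : x ≤ x')
    (hf : IntegrableOn f (Ioo 0 x')) :
    ∫ y in Ioo 0 x', f y = (∫ y in Ioo 0 x, f y) + ∫ y in Ico x x', f y := by
  rw [← Ioo_union_Ico_eq_Ioo hx hxx'] at hf ⊢
  exact setIntegral_union (disjoint_left.2 fun _ hy hy' => hy.2.not_ge hy'.1) measurableSet_Ico
    (hf.mono_set subset_union_left) (hf.mono_set subset_union_right)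

section Integrals

variable {q a M x x' w : ℝ} {ξ : ℝ → ℝ} {s : Set ℝ}

lemma integrableOn_phiR_div (hq : q ∈ Ioo 0 1) (hmeas : Measurable ξ) (hs : volume s ≠ ⊤)
    (ha : 0 < a) (hξ : ∀ᵐ y ∂volume.restrict s, a ≤ ξ y) (hw : 0 ≤ w) (hwa : w < a) (n : ℕ) :
    IntegrableOn (fun y => phiR q n (w / ξ y)) s := by
  have hu : ∀ᵐ y ∂volume.restrict s, 0 ≤ w / ξ y ∧ w / ξ y ≤ w / a := by
    filter_upwards [hξ] with y hy
    exact ⟨div_nonneg hw (ha.le.trans hy), div_le_div_of_nonneg_left hw ha hy⟩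
  have hwa1 : w / a < 1 := (div_lt_one ha).2 hwa
  have hφ_meas : AEStronglyMeasurable (fun y => phiR q n (w / ξ y)) (volume.restrict s) := by
    refine aestronglyMeasurable_of_tendsto_ae atTop (f := fun N y => ∑ k ∈ Finset.range N,
      ((k : ℝ) + 1) ^ n * (w / ξ y) ^ (k + 1) / (1 - q ^ (k + 1))) (fun N => ?_) ?_
    · exact (Finset.measurable_sum _ fun k _ => by fun_prop).aestronglyMeasurable
    · filter_upwards [hu] with y hy
      exact (summable_phiR_term hq hy.1 (hy.2.trans_lt hwa1) n).hasSum.tendsto_sum_nat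
  refine IntegrableOn.of_bound hs.lt_top hφ_meas (phiR q n (w / a)) ?_
  filter_upwards [hu] with y hy
  rw [Real.norm_of_nonneg (phiR_nonneg hq hy.1 n)]
  exact phiR_le_phiR hq hy.1 hy.2 hwa1 n

lemma integrableOn_one_div_one_sub_mul (hq : q < 1) (hmeas : Measurable ξ) (hs : volume s ≠ ⊤)
    (ha : 0 < a) (hξ : ∀ᵐ y ∂volume.restrict s, a ≤ ξ y) :
    IntegrableOn (fun y => 1 / ((1 - q) * ξ y)) s := by
  have hq' : 0 < 1 - q := sub_pos.2 hq
  refine IntegrableOn.of_bound hs.lt_top (Measurable.aestronglyMeasurable (by fun_prop))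
    (1 / ((1 - q) * a)) ?_
  filter_upwards [hξ] with y hy
  have := ha.trans_le hy
  rw [Real.norm_of_nonneg (by positivity)]
  gcongr

lemma monotoneOn_PhiI_div (hq : q ∈ Ioo 0 1) (hmeas : Measurable ξ) (ha : 0 < a)
    (hξ : ∀ᵐ y ∂volume.restrict (Ioo 0 x), a ≤ ξ y) (n : ℕ) :
    MonotoneOn (fun w => PhiI q n ξ x w / w) (Ioo 0 a) := by
  intro w₁ hw₁ w₂ hw₂ hw
  have hfin : volume (Ioo 0 x) ≠ ⊤ := measure_Ioo_lt_top.ne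
  dsimp only
  rw [div_le_div_iff₀ hw₁.1 hw₂.1, PhiI, PhiI, ← integral_mul_const, ← integral_mul_const]
  refine integral_mono_ae
    ((integrableOn_phiR_div hq hmeas hfin ha hξ hw₁.1.le hw₁.2 n).mul_const _)
    ((integrableOn_phiR_div hq hmeas hfin ha hξ hw₂.1.le hw₂.2 n).mul_const _) ?_
  filter_upwards [hξ] with y hy
  have hξy : 0 < ξ y := ha.trans_le hy
  have h := mul_le_mul_of_nonneg_right (phiR_mul_le_mul_phiR hq (div_nonneg hw₁.1.le hξy.le)
    (div_le_div_of_nonneg_right hw hξy.le) ((div_lt_one hξy).2 (hw₂.2.trans_le hy)) n) hξy.le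
  rwa [mul_assoc, mul_assoc, div_mul_cancel₀ _ hξy.ne', div_mul_cancel₀ _ hξy.ne'] at h

lemma tauE_add_le_PhiI_div (hq : q ∈ Ioo 0 1) (hmeas : Measurable ξ) (hx : 0 ≤ x) (ha : 0 < a)
    (hξ : ∀ᵐ y ∂volume.restrict (Ioo 0 x), a ≤ ξ y ∧ ξ y ≤ M) (hw : 0 < w) (hwa : w < a) :
    tauE q ξ x + x * w / M ^ 2 ≤ PhiI q 2 ξ x w / w := by
  have hfin : volume (Ioo 0 x) ≠ ⊤ := measure_Ioo_lt_top.ne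
  have hξa := hξ.mono fun y hy => hy.1
  have hτ := (integrableOn_one_div_one_sub_mul hq.2 hmeas hfin ha hξa).const_mul w
  have hsq : IntegrableOn (fun _ => (w / M) ^ 2) (Ioo 0 x) := integrableOn_const hfin
  have hsplit : (tauE q ξ x + x * w / M ^ 2) * w
      = ∫ y in Ioo 0 x, (w * (1 / ((1 - q) * ξ y)) + (w / M) ^ 2) := by
    rw [integral_add hτ hsq, integral_const_mul, setIntegral_const, Real.volume_real_Ioo_of_le hx,
      tauE, smul_eq_mul]
    ring
  rw [le_div_iff₀ hw, hsplit, PhiI]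
  refine integral_mono_ae (hτ.add hsq)
    (integrableOn_phiR_div hq hmeas hfin ha hξa hw.le hwa 2) ?_
  filter_upwards [hξ] with y hy
  have hξy : 0 < ξ y := ha.trans_le hy.1
  calc w * (1 / ((1 - q) * ξ y)) + (w / M) ^ 2 = w / ξ y / (1 - q) + (w / M) ^ 2 := by
        field_simp
    _ ≤ w / ξ y / (1 - q) + (w / ξ y) ^ 2 := by
        have := hξy.trans_le hy.2
        gcongr
        exact hy.2
    _ ≤ phiR q 2 (w / ξ y) :=
        div_one_sub_add_sq_le_phiR_two hq (by positivity) ((div_lt_one hξy).2 (hwa.trans_le hy.1))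

lemma PhiI_add_le_PhiI (hq : q ∈ Ioo 0 1) (hmeas : Measurable ξ) (hx : 0 < x) (hxx' : x ≤ x')
    (ha : 0 < a) (hξ : ∀ᵐ y ∂volume.restrict (Ioo 0 x'), a ≤ ξ y ∧ ξ y ≤ M) (hw : 0 ≤ w)
    (hwa : w < a) : PhiI q 2 ξ x w + (w / M) ^ 2 * (x' - x) ≤ PhiI q 2 ξ x' w := by
  have hsub : Ico x x' ⊆ Ioo 0 x' := fun y hy => ⟨hx.trans_le hy.1, hy.2⟩
  have hξ' := ae_restrict_of_ae_restrict_of_subset hsub hξ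
  have hint := integrableOn_phiR_div hq hmeas measure_Ioo_lt_top.ne ha
    (hξ.mono fun y hy => hy.1) hw hwa 2
  rw [PhiI, PhiI, setIntegral_Ioo_eq_add_Ico hx hxx' hint, ← Real.volume_real_Ico_of_le hxx']
  gcongr
  refine const_mul_measureReal_le_setIntegral measure_Ico_lt_top.ne (hint.mono_set hsub) ?_
  filter_upwards [hξ'] with y hy
  have hξy : 0 < ξ y := ha.trans_le hy.1
  calc (w / M) ^ 2 ≤ (w / ξ y) ^ 2 := by
        have := hξy.trans_le hy.2
        gcongr
        exact hy.2
    _ ≤ w / ξ y / (1 - q) + (w / ξ y) ^ 2 := by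
        have := sub_pos.2 hq.2
        have : 0 ≤ w / ξ y := by positivity
        linarith [div_nonneg this (sub_pos.2 hq.2).le]
    _ ≤ phiR q 2 (w / ξ y) :=
        div_one_sub_add_sq_le_phiR_two hq (by positivity) ((div_lt_one hξy).2 (hwa.trans_le hy.1))

end Integrals

section TauE

variable {q m M x x' : ℝ} {ξ : ℝ → ℝ}

lemma tauE_add_le_tauE (hq : q < 1) (hmeas : Measurable ξ) (hm : 0 < m) (hx : 0 < x)
    (hxx' : x ≤ x') (hξ : ∀ᵐ y ∂volume.restrict (Ioo 0 x'), m ≤ ξ y ∧ ξ y ≤ M) :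
    tauE q ξ x + 1 / ((1 - q) * M) * (x' - x) ≤ tauE q ξ x' := by
  have hsub : Ico x x' ⊆ Ioo 0 x' := fun y hy => ⟨hx.trans_le hy.1, hy.2⟩
  have hint := integrableOn_one_div_one_sub_mul hq hmeas measure_Ioo_lt_top.ne hm
    (hξ.mono fun y hy => hy.1)
  rw [tauE, tauE, setIntegral_Ioo_eq_add_Ico hx hxx' hint, ← Real.volume_real_Ico_of_le hxx']
  gcongr
  refine const_mul_measureReal_le_setIntegral measure_Ico_lt_top.ne (hint.mono_set hsub) ?_
  filter_upwards [ae_restrict_of_ae_restrict_of_subset hsub hξ] with y hy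
  have := sub_pos.2 hq
  have := hm.trans_le hy.1
  gcongr
  exact hy.2

lemma tauE_le_tauE_add (hq : q < 1) (hmeas : Measurable ξ) (hm : 0 < m) (hx : 0 < x)
    (hxx' : x ≤ x') (hξ : ∀ᵐ y ∂volume.restrict (Ioo 0 x'), m ≤ ξ y) :
    tauE q ξ x' ≤ tauE q ξ x + 1 / ((1 - q) * m) * (x' - x) := by
  have hsub : Ico x x' ⊆ Ioo 0 x' := fun y hy => ⟨hx.trans_le hy.1, hy.2⟩
  have hint := integrableOn_one_div_one_sub_mul hq hmeas measure_Ioo_lt_top.ne hm hξ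
  rw [tauE, tauE, setIntegral_Ioo_eq_add_Ico hx hxx' hint, ← Real.volume_real_Ico_of_le hxx']
  gcongr
  refine setIntegral_le_const_mul_measureReal measure_Ico_lt_top.ne (hint.mono_set hsub) ?_
  filter_upwards [ae_restrict_of_ae_restrict_of_subset hsub hξ] with y hy
  have := sub_pos.2 hq
  gcongr

end TauE

section EssInf

variable {m M x x' : ℝ} {ξ : ℝ → ℝ}

lemma neBot_ae_restrict_Ioo (hx : 0 < x) : (ae (volume.restrict (Ioo (0 : ℝ) x))).NeBot :=
  ae_restrict_neBot.2 (by simp [hx])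

variable (hbound : ∀ᵐ y : ℝ ∂volume, 0 < y → m ≤ ξ y ∧ ξ y ≤ M)
include hbound

lemma ae_restrict_Ioo_bounds (x : ℝ) :
    ∀ᵐ y ∂volume.restrict (Ioo 0 x), m ≤ ξ y ∧ ξ y ≤ M := by
  filter_upwards [ae_restrict_of_ae hbound, ae_restrict_mem measurableSet_Ioo] with y hy hmem
  exact hy hmem.1

lemma le_of_ae_bounds : m ≤ M := by
  have := neBot_ae_restrict_Ioo one_pos
  obtain ⟨y, hy⟩ := (ae_restrict_Ioo_bounds hbound 1).exists
  exact hy.1.trans hy.2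

lemma le_essInf_Ioo (hx : 0 < x) : m ≤ essInf ξ (volume.restrict (Ioo 0 x)) := by
  have := neBot_ae_restrict_Ioo hx
  exact le_essInf_of_ae_le m ((ae_restrict_Ioo_bounds hbound x).mono fun y hy => hy.1)
    (IsBoundedUnder.isCoboundedUnder_ge
      ⟨M, eventually_map.2 ((ae_restrict_Ioo_bounds hbound x).mono fun y hy => hy.2)⟩)

lemma ae_essInf_Ioo_le (x : ℝ) :
    ∀ᵐ y ∂volume.restrict (Ioo 0 x), essInf ξ (volume.restrict (Ioo 0 x)) ≤ ξ y ∧ ξ y ≤ M := by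
  filter_upwards [ae_essInf_le ⟨m, eventually_map.2 ((ae_restrict_Ioo_bounds hbound x).mono
    fun y hy => hy.1)⟩, ae_restrict_Ioo_bounds hbound x] with y h1 h2 using ⟨h1, h2.2⟩

lemma essInf_Ioo_anti (hx : 0 < x) (hxx' : x ≤ x') :
    essInf ξ (volume.restrict (Ioo 0 x')) ≤ essInf ξ (volume.restrict (Ioo 0 x)) := by
  have := neBot_ae_restrict_Ioo hx
  exact essInf_antitone_measure
    (Measure.restrict_mono (Ioo_subset_Ioo le_rfl hxx') le_rfl).absolutelyContinuous
    ⟨m, eventually_map.2 ((ae_restrict_Ioo_bounds hbound x').mono fun y hy => hy.1)⟩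
    (IsBoundedUnder.isCoboundedUnder_ge
      ⟨M, eventually_map.2 ((ae_restrict_Ioo_bounds hbound x).mono fun y hy => hy.2)⟩)

end EssInf

lemma tendsto_nhds_zero_of_forall_eventually_lt {α : Type*} {l : Filter α} {f : α → ℝ} {c : ℝ}
    (hc : 0 < c) (hpos : ∀ᶠ t in l, 0 < f t) (hsmall : ∀ ε ∈ Ioo 0 c, ∀ᶠ t in l, f t < ε) :
    Tendsto f l (𝓝 0) := by
  refine tendsto_order.2 ⟨fun a ha => hpos.mono fun t ht => ha.trans ht, fun a ha => ?_⟩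
  have hmin : min a c / 2 ∈ Ioo 0 c := ⟨by positivity, by linarith [min_le_right a c]⟩
  filter_upwards [hsmall _ hmin] with t ht
  linarith [min_le_left a c]

lemma MonotoneOn.strictMonoOn_of_leftInvOn {α β : Type*} [LinearOrder α] [Preorder β]
    {g : α → β} {ω : β → α} {s : Set β} {t : Set α} (hg : MonotoneOn g t) (hω : MapsTo ω s t)
    (hinv : LeftInvOn g ω s) : StrictMonoOn ω s := fun τ₁ h₁ τ₂ h₂ h =>
  hg.reflect_lt (hω h₁) (hω h₂) (by rwa [hinv h₁, hinv h₂])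

section Inverse

variable {g ω : ℝ → ℝ} {W τ₀ : ℝ}

lemma tendsto_nhdsGT_of_leftInvOn (hg : MonotoneOn g (Ioo 0 W)) (hω : MapsTo ω (Ioi τ₀) (Ioo 0 W))
    (hinv : LeftInvOn g ω (Ioi τ₀)) (hlt : ∀ ε ∈ Ioo 0 W, τ₀ < g ε) :
    Tendsto ω (𝓝[>] τ₀) (𝓝 0) := by
  have hW : 0 < W := (hω (lt_add_one τ₀)).1.trans (hω (lt_add_one τ₀)).2
  refine tendsto_nhds_zero_of_forall_eventually_lt hW ?_ fun ε hε => ?_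
  · filter_upwards [self_mem_nhdsWithin] with τ hτ using (hω hτ).1
  · filter_upwards [self_mem_nhdsWithin, nhdsWithin_le_nhds (eventually_lt_nhds (hlt ε hε))]
      with τ hτ hτε
    exact hg.reflect_lt (hω hτ) hε (by rwa [hinv hτ])

lemma tendsto_atTop_of_leftInvOn (hg : MonotoneOn g (Ioo 0 W)) (hω : MapsTo ω (Ioi τ₀) (Ioo 0 W))
    (hinv : LeftInvOn g ω (Ioi τ₀)) : Tendsto ω atTop (𝓝 W) := by
  have hW : 0 < W := (hω (lt_add_one τ₀)).1.trans (hω (lt_add_one τ₀)).2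
  refine tendsto_order.2 ⟨fun a ha => ?_, fun a ha => ?_⟩
  · set b := max a (W / 2)
    have hb : b ∈ Ioo 0 W := ⟨by positivity, max_lt ha (by linarith)⟩
    filter_upwards [eventually_gt_atTop (max τ₀ (g b))] with τ hτ
    have hτ₀ : τ ∈ Ioi τ₀ := (le_max_left _ _).trans_lt hτ
    exact (le_max_left a _).trans_lt
      (hg.reflect_lt hb (hω hτ₀) (by rw [hinv hτ₀]; exact (le_max_right _ _).trans_lt hτ))
  · filter_upwards [eventually_gt_atTop τ₀] with τ hτ using (hω hτ).2.trans ha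

end Inverse

section Root

variable {q m M τ : ℝ} {ξ : ℝ → ℝ} {ω : ℝ → ℝ → ℝ}
  (hq : q ∈ Ioo 0 1) (hmeas : Measurable ξ) (hm : 0 < m)
  (hbound : ∀ᵐ y : ℝ ∂volume, 0 < y → m ≤ ξ y ∧ ξ y ≤ M)
  (hroot : ∀ τ x, 0 < x → tauE q ξ x < τ →
    ω τ x ∈ Ioo 0 (essInf ξ (volume.restrict (Ioo 0 x))) ∧ PhiI q 2 ξ x (ω τ x) / ω τ x = τ)
include hq hmeas hm hbound hroot

lemma root_lt_root_of_lt {x x' : ℝ} (hx : 0 < x) (hxx' : x < x') (hτ : tauE q ξ x' < τ) :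
    ω τ x' < ω τ x := by
  have hM : 0 < M := hm.trans_le (le_of_ae_bounds hbound)
  have hWx := hm.trans_le (le_essInf_Ioo hbound hx)
  have hWx' := hm.trans_le (le_essInf_Ioo hbound (hx.trans hxx'))
  obtain ⟨⟨hω₀, hωW⟩, hω'⟩ := hroot τ x' (hx.trans hxx') hτ
  have hτx : tauE q ξ x < τ := by
    have := tauE_add_le_tauE hq.2 hmeas hm hx hxx'.le (ae_restrict_Ioo_bounds hbound x')
    have : 0 < 1 / ((1 - q) * M) * (x' - x) := mul_pos (by simp [hM, hq.2]) (sub_pos.2 hxx')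
    linarith
  obtain ⟨hmem, hωx⟩ := hroot τ x hx hτx
  refine (monotoneOn_PhiI_div hq hmeas hWx ((ae_essInf_Ioo_le hbound x).mono fun y hy => hy.1) 2
    ).reflect_lt ⟨hω₀, hωW.trans_le (essInf_Ioo_anti hbound hx hxx'.le)⟩ hmem ?_
  rw [hωx]
  have := PhiI_add_le_PhiI hq hmeas hx hxx'.le hWx' (ae_essInf_Ioo_le hbound x') hω₀.le hωW
  have : 0 < (ω τ x' / M) ^ 2 * (x' - x) := by have := sub_pos.2 hxx'; positivity
  exact (div_lt_div_of_pos_right (by linarith) hω₀).trans_eq hω'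

lemma tendsto_root_nhdsLT {xe : ℝ} (hxe : 0 < xe) (hτ : tauE q ξ xe = τ) :
    Tendsto (fun x => ω τ x) (𝓝[<] xe) (𝓝 0) := by
  have hM : 0 < M := hm.trans_le (le_of_ae_bounds hbound)
  have hnear : ∀ᶠ x in 𝓝[<] xe, x ∈ Ioo 0 xe := Ioo_mem_nhdsLT hxe
  have hτx : ∀ x ∈ Ioo 0 xe, tauE q ξ x < τ := fun x hx => by
    have := tauE_add_le_tauE hq.2 hmeas hm hx.1 hx.2.le (ae_restrict_Ioo_bounds hbound xe)
    have : 0 < 1 / ((1 - q) * M) * (xe - x) := mul_pos (by simp [hM, hq.2]) (sub_pos.2 hx.2)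
    linarith
  refine tendsto_nhds_zero_of_forall_eventually_lt hm ?_ fun ε hε => ?_
  · filter_upwards [hnear] with x hx using (hroot τ x hx.1 (hτx x hx)).1.1
  have hgap : Tendsto (fun x => x * ε / M ^ 2 - 1 / ((1 - q) * m) * (xe - x)) (𝓝[<] xe)
      (𝓝 (xe * ε / M ^ 2)) := by
    refine tendsto_nhdsWithin_of_tendsto_nhds ?_
    convert (show Continuous fun x => x * ε / M ^ 2 - 1 / ((1 - q) * m) * (xe - x) by
      fun_prop).tendsto xe using 2
    ring
  filter_upwards [hnear, hgap.eventually_const_lt (by have := hε.1; positivity)] with x hx hpos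
  obtain ⟨hmem, hωx⟩ := hroot τ x hx.1 (hτx x hx)
  have hWx := le_essInf_Ioo hbound hx.1
  refine (monotoneOn_PhiI_div hq hmeas (hm.trans_le hWx)
    ((ae_essInf_Ioo_le hbound x).mono fun y hy => hy.1) 2).reflect_lt hmem
    ⟨hε.1, hε.2.trans_le hWx⟩ ?_
  rw [hωx]
  calc τ ≤ tauE q ξ x + 1 / ((1 - q) * m) * (xe - x) :=
        hτ ▸ tauE_le_tauE_add hq.2 hmeas hm hx.1 hx.2.le
          ((ae_restrict_Ioo_bounds hbound xe).mono fun y hy => hy.1)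
    _ < tauE q ξ x + x * ε / M ^ 2 := by linarith
    _ ≤ PhiI q 2 ξ x ε / ε := tauE_add_le_PhiI_div hq hmeas hx.1.le (hm.trans_le hWx)
        (ae_essInf_Ioo_le hbound x) hε.1 (hε.2.trans_le hWx)

end Root

theorem stmt_5_general (q : ℝ) (hq : q ∈ Set.Ioo (0:ℝ) 1)
    (ξ : ℝ → ℝ) (hmeas : Measurable ξ) (m M : ℝ) (hm : 0 < m)
    (hbound : ∀ᵐ y : ℝ ∂volume, 0 < y → m ≤ ξ y ∧ ξ y ≤ M)
    (Wo : ℝ → ℝ) (hWo : ∀ x : ℝ, Wo x = essInf ξ (volume.restrict (Set.Ioo 0 x)))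
    -- `ω τ x` is the unique root of `τ·w = Φ₂(w∣x)` on `(0, W°_x)`:
    (ω : ℝ → ℝ → ℝ)
    (hω : ∀ τ x : ℝ, 0 < x → tauE q ξ x < τ →
      ω τ x ∈ Set.Ioo 0 (Wo x) ∧ τ * ω τ x = PhiI q 2 ξ x (ω τ x) ∧
      ∀ w ∈ Set.Ioo 0 (Wo x), τ * w = PhiI q 2 ξ x w → w = ω τ x) :
    -- (i) monotonicity and limits in τ
    (∀ x : ℝ, 0 < x →
      StrictMonoOn (fun τ => ω τ x) (Set.Ioi (tauE q ξ x)) ∧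
      Tendsto (fun τ => ω τ x) (nhdsWithin (tauE q ξ x) (Set.Ioi (tauE q ξ x))) (nhds 0) ∧
      Tendsto (fun τ => ω τ x) atTop (nhds (Wo x))) ∧
    -- (ii) monotonicity and limit in x
    (∀ τ : ℝ, 0 < τ →
      (∀ x x' : ℝ, 0 < x → x < x' → tauE q ξ x' < τ → ω τ x' < ω τ x) ∧
      (∀ xe : ℝ, 0 < xe → tauE q ξ xe = τ →
        Tendsto (fun x => ω τ x) (nhdsWithin xe (Set.Iio xe)) (nhds 0))) := by
  obtain rfl : Wo = fun x => essInf ξ (volume.restrict (Ioo 0 x)) := funext hWo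
  have hroot : ∀ τ x, 0 < x → tauE q ξ x < τ → ω τ x ∈ Ioo 0 (essInf ξ (volume.restrict
      (Ioo 0 x))) ∧ PhiI q 2 ξ x (ω τ x) / ω τ x = τ := fun τ x hx hτ => by
    obtain ⟨hmem, heq, -⟩ := hω τ x hx hτ
    exact ⟨hmem, by rw [← heq, mul_div_cancel_right₀ _ hmem.1.ne']⟩
  refine ⟨fun x hx => ?_, fun τ _ => ⟨fun x x' hx hxx' hτ =>
    root_lt_root_of_lt hq hmeas hm hbound hroot hx hxx' hτ,
    fun xe hxe hτ => tendsto_root_nhdsLT hq hmeas hm hbound hroot hxe hτ⟩⟩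
  have hW := hm.trans_le (le_essInf_Ioo hbound hx)
  have hg := monotoneOn_PhiI_div hq hmeas hW ((ae_essInf_Ioo_le hbound x).mono fun y hy => hy.1) 2
  have hmaps : MapsTo (fun τ => ω τ x) (Ioi (tauE q ξ x)) (Ioo 0 _) :=
    fun τ hτ => (hroot τ x hx hτ).1
  have hinv : LeftInvOn (fun w => PhiI q 2 ξ x w / w) (fun τ => ω τ x) (Ioi (tauE q ξ x)) :=
    fun τ hτ => (hroot τ x hx hτ).2
  refine ⟨hg.strictMonoOn_of_leftInvOn hmaps hinv,
    tendsto_nhdsGT_of_leftInvOn hg hmaps hinv fun ε hε => ?_,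
    tendsto_atTop_of_leftInvOn hg hmaps hinv⟩
  have hM : 0 < M := hm.trans_le (le_of_ae_bounds hbound)
  calc tauE q ξ x < tauE q ξ x + x * ε / M ^ 2 :=
        lt_add_of_pos_right _ (by have := hε.1; positivity)
    _ ≤ PhiI q 2 ξ x ε / ε :=
      tauE_add_le_PhiI_div hq hmeas hx.le hW (ae_essInf_Ioo_le hbound x) hε.1 hε.2

theorem stmt_5 (q : ℝ) (hq : q ∈ Set.Ioo (0:ℝ) 1)
    (ξ : ℝ → ℝ) (hmeas : Measurable ξ) (m M : ℝ) (hm : 0 < m)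
    (hbound : ∀ᵐ y : ℝ ∂volume, 0 < y → m ≤ ξ y ∧ ξ y ≤ M)
    (Wo : ℝ → ℝ) (hWo : ∀ x : ℝ, Wo x = essInf ξ (volume.restrict (Set.Ioo 0 x)))
    (hblow : ∀ x : ℝ, 0 < x → Tendsto (fun w => PhiI q 2 ξ x w)
      (nhdsWithin (Wo x) (Set.Iio (Wo x))) atTop)
    -- `ω τ x` is the unique root of `τ·w = Φ₂(w∣x)` on `(0, W°_x)`:
    (ω : ℝ → ℝ → ℝ)
    (hω : ∀ τ x : ℝ, 0 < x → tauE q ξ x < τ →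
      ω τ x ∈ Set.Ioo 0 (Wo x) ∧ τ * ω τ x = PhiI q 2 ξ x (ω τ x) ∧
      ∀ w ∈ Set.Ioo 0 (Wo x), τ * w = PhiI q 2 ξ x w → w = ω τ x) :
    -- (i) monotonicity and limits in τ
    (∀ x : ℝ, 0 < x →
      StrictMonoOn (fun τ => ω τ x) (Set.Ioi (tauE q ξ x)) ∧
      Tendsto (fun τ => ω τ x) (nhdsWithin (tauE q ξ x) (Set.Ioi (tauE q ξ x))) (nhds 0) ∧
      Tendsto (fun τ => ω τ x) atTop (nhds (Wo x))) ∧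
    -- (ii) monotonicity and limit in x
    (∀ τ : ℝ, 0 < τ →
      (∀ x x' : ℝ, 0 < x → x < x' → tauE q ξ x' < τ → ω τ x' < ω τ x) ∧
      (∀ xe : ℝ, 0 < xe → tauE q ξ xe = τ →
        Tendsto (fun x => ω τ x) (nhdsWithin xe (Set.Iio xe)) (nhds 0))) :=
  stmt_5_general q hq ξ hmeas m M hm hbound Wo hWo ω hω
end

section
/- At (τ₀,x₀) the partial derivatives of 𝓗 exist and satisfy ∂𝓗/∂τ (τ₀,x₀) = ω(τ₀,x₀) and ∂𝓗/∂x (τ₀,x₀) = −φ₁( ω(τ₀,x₀)/ξ(x₀) ). Consequently 𝓗 satisfies the limit-shape partial differential equation ∂𝓗/∂x = −φ₁( (1/ξ(x)) · ∂𝓗/∂τ ) at (τ₀,x₀). -/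
/-!
Differentiating `𝓗 = τ ω - Φ₁(ω ∣ x)` by the chain rule, the terms containing a derivative of `ω`
cancel: `∂_w Φ₁(w ∣ x) = Φ₂(w ∣ x) / w` because `w φ₁'(w) = φ₂(w)`, and the implicit equation says
that this equals `τ` at `w = ω`. What is left is `ω` in the `τ`-direction and, in the `x`-direction,
the derivative of `Φ₁` in its upper limit of integration, `-φ₁(ω / ξ(x))`. To justify these steps,
continuity of `ξ` upgrades the bound `ω < ess inf ξ` to a pointwise bound `ω < c ≤ ξ` on an
interval `(0, b)` reaching past `x₀`, so that all integrands are uniformly bounded there.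
-/

open MeasureTheory Filter

open Set Topology
open scoped Interval

lemma summable_succ_pow_mul_geometric (n : ℕ) {r : ℝ} (hr : |r| < 1) :
    Summable fun k : ℕ => ((k : ℝ) + 1) ^ n * r ^ k := by
  simp_rw [add_pow, one_pow, mul_one, Finset.sum_mul]
  refine summable_sum fun j _ => ?_
  simpa [mul_comm, mul_assoc] using
    (summable_pow_mul_geometric_of_norm_lt_one j (r := r) (by rwa [Real.norm_eq_abs])).mul_left
      (n.choose j : ℝ)

section phiR

variable {q : ℝ} (hq0 : 0 ≤ q) (hq1 : q < 1)
include hq0 hq1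

lemma one_sub_le_one_sub_pow_succ (k : ℕ) : 1 - q ≤ 1 - q ^ (k + 1) := by
  have : q ^ (k + 1) ≤ q := pow_le_of_le_one hq0 hq1.le k.succ_ne_zero
  linarith

lemma summable_succ_pow_mul_pow_div (n : ℕ) {r : ℝ} (hr : |r| < 1) :
    Summable fun k : ℕ => ((k : ℝ) + 1) ^ n * r ^ k / (1 - q ^ (k + 1)) := by
  refine .of_norm_bounded ((summable_succ_pow_mul_geometric n (r := |r|)
    (by rwa [abs_abs])).div_const (1 - q)) fun k => ?_
  have hden := one_sub_le_one_sub_pow_succ hq0 hq1 k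
  rw [Real.norm_eq_abs, abs_div, abs_mul, abs_pow, abs_pow,
    abs_of_nonneg (by positivity : (0 : ℝ) ≤ k + 1), abs_of_pos (by linarith : 0 < 1 - q ^ (k + 1))]
  gcongr

lemma summable_phiR_terms (n : ℕ) {v : ℝ} (hv : |v| < 1) :
    Summable fun k : ℕ => ((k : ℝ) + 1) ^ n * v ^ (k + 1) / (1 - q ^ (k + 1)) :=
  ((summable_succ_pow_mul_pow_div hq0 hq1 n hv).mul_left v).congr fun k => by ring

lemma abs_phiR_le (n : ℕ) {v r : ℝ} (hvr : |v| ≤ r) (hr : r < 1) : |phiR q n v| ≤ phiR q n r := by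
  have hr0 : 0 ≤ r := (abs_nonneg v).trans hvr
  rw [← Real.norm_eq_abs, phiR, phiR]
  refine tsum_of_norm_bounded (summable_phiR_terms hq0 hq1 n (by rwa [abs_of_nonneg hr0])).hasSum
    fun k => ?_
  have hden : 0 < 1 - q ^ (k + 1) := by linarith [one_sub_le_one_sub_pow_succ hq0 hq1 k]
  rw [Real.norm_eq_abs, abs_div, abs_mul, abs_pow, abs_pow, abs_of_pos hden,
    abs_of_nonneg (by positivity : (0 : ℝ) ≤ k + 1)]
  gcongr

lemma hasDerivAt_phiR (n : ℕ) {w : ℝ} (hw : |w| < 1) :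
    HasDerivAt (phiR q n) (∑' k : ℕ, ((k : ℝ) + 1) ^ (n + 1) * w ^ k / (1 - q ^ (k + 1))) w := by
  obtain ⟨r, hwr, hr1⟩ := exists_between hw
  have hr0 : 0 < r := (abs_nonneg w).trans_lt hwr
  have hr : |r| < 1 := by rwa [abs_of_pos hr0]
  unfold phiR
  refine hasDerivAt_tsum_of_isPreconnected
    (g := fun (k : ℕ) (y : ℝ) => ((k : ℝ) + 1) ^ n * y ^ (k + 1) / (1 - q ^ (k + 1)))
    (g' := fun (k : ℕ) (y : ℝ) => ((k : ℝ) + 1) ^ (n + 1) * y ^ k / (1 - q ^ (k + 1)))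
    (summable_succ_pow_mul_pow_div hq0 hq1 (n + 1) hr)
    Metric.isOpen_ball (convex_ball (0 : ℝ) r).isPreconnected (fun k y _ => ?_) (fun k y hy => ?_)
    (Metric.mem_ball_self hr0) (by simp)
    (by rwa [mem_ball_zero_iff])
  · refine (((hasDerivAt_pow (k + 1) y).const_mul _).div_const _).congr_deriv ?_
    rw [Nat.add_sub_cancel]
    push_cast
    ring
  · have hden : 0 < 1 - q ^ (k + 1) := by linarith [one_sub_le_one_sub_pow_succ hq0 hq1 k]
    rw [mem_ball_zero_iff, Real.norm_eq_abs] at hy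
    rw [Real.norm_eq_abs, abs_div, abs_mul, abs_pow, abs_pow, abs_of_pos hden,
      abs_of_nonneg (by positivity : (0 : ℝ) ≤ k + 1)]
    gcongr

lemma hasDerivAt_phiR_div (n : ℕ) {w a : ℝ} (hw : w ≠ 0) (ha : a ≠ 0) (hwa : |w / a| < 1) :
    HasDerivAt (fun w => phiR q n (w / a)) (phiR q (n + 1) (w / a) / w) w := by
  refine ((hasDerivAt_phiR hq0 hq1 n hwa).comp w ((hasDerivAt_id w).div_const a)).congr_deriv ?_
  rw [phiR, ← tsum_div_const, ← tsum_mul_right]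
  refine tsum_congr fun k => ?_
  field_simp
  rw [pow_succ (w / a) k]
  field_simp

lemma continuousAt_phiR (n : ℕ) {w : ℝ} (hw : |w| < 1) : ContinuousAt (phiR q n) w :=
  (hasDerivAt_phiR hq0 hq1 n hw).continuousAt

end phiR

lemma forall_le_of_ae_le_of_continuousOn_Ioo {f : ℝ → ℝ} {a b c : ℝ}
    (hf : ContinuousOn f (Ioo a b)) (h : ∀ᵐ y ∂volume.restrict (Ioo a b), c ≤ f y) :
    ∀ y ∈ Ioo a b, c ≤ f y := by
  have := Measure.eqOn_Ioo_of_ae_eq volume (f := fun y => f y ⊓ c) (g := fun _ => c)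
    (h.mono fun _ hy => inf_eq_right.2 hy) (hf.inf continuousOn_const) continuousOn_const
  exact fun y hy => inf_eq_right.1 (this hy)

lemma exists_forall_le_of_lt_essInf {ξ : ℝ → ℝ} {X x₀ w m : ℝ}
    (hcont : ContinuousOn ξ (Ioo 0 X)) (hm : ∀ y ∈ Ioo 0 X, m ≤ ξ y) (hx₀ : x₀ ∈ Ioo 0 X)
    (hw : w < essInf ξ (volume.restrict (Ioo 0 x₀))) :
    ∃ c b, w < c ∧ x₀ < b ∧ b ≤ X ∧ ∀ y ∈ Ioo 0 b, c ≤ ξ y := by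
  have hsub : Ioo 0 x₀ ⊆ Ioo 0 X := Ioo_subset_Ioo_right hx₀.2.le
  obtain ⟨c₁, hwc₁, hc₁⟩ := exists_between hw
  have hbdd : IsBoundedUnder (· ≥ ·) (ae (volume.restrict (Ioo 0 x₀))) ξ :=
    ⟨m, eventually_map.2 (ae_restrict_of_forall_mem measurableSet_Ioo fun y hy => hm y (hsub hy))⟩
  have hleft : ∀ y ∈ Ioo 0 x₀, c₁ ≤ ξ y := forall_le_of_ae_le_of_continuousOn_Ioo
    (hcont.mono hsub) ((ae_lt_of_lt_essInf hc₁ hbdd).mono fun _ hy => hy.le)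
  have hξx₀ : ContinuousAt ξ x₀ := hcont.continuousAt (isOpen_Ioo.mem_nhds hx₀)
  have hc₁x₀ : c₁ ≤ ξ x₀ :=
    ContinuousWithinAt.closure_le (by rw [closure_Ioo hx₀.1.ne]; exact right_mem_Icc.2 hx₀.1.le)
      continuousWithinAt_const hξx₀.continuousWithinAt hleft
  obtain ⟨c, hwc, hcc₁⟩ := exists_between hwc₁
  obtain ⟨b, hx₀b, hb⟩ := exists_Ico_subset_of_mem_nhds
    (hξx₀.eventually (lt_mem_nhds (hcc₁.trans_le hc₁x₀))) ⟨x₀ + 1, by linarith⟩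
  refine ⟨c, min b X, hwc, lt_min hx₀b hx₀.2, min_le_right _ _, fun y hy => ?_⟩
  rcases lt_or_ge y x₀ with hyx₀ | hyx₀
  · exact hcc₁.le.trans (hleft y ⟨hy.1, hyx₀⟩)
  · exact (hb ⟨hyx₀, hy.2.trans_le (min_le_left _ _)⟩).le

lemma hasDerivAt_intervalIntegral_upper_of_continuousAt {E : Type*} [NormedAddCommGroup E]
    [NormedSpace ℝ E] [CompleteSpace E] {F : ℝ → ℝ → E} {p : ℝ → ℝ} {a : ℝ}
    (hF : ContinuousAt (Function.uncurry F) (a, p a)) (hp : ContinuousAt p a)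
    (hint : ∀ᶠ u in 𝓝 a, IntervalIntegrable (fun y => F y (p u)) volume a u) :
    HasDerivAt (fun u => ∫ y in a..u, F y (p u)) (F a (p a)) a := by
  rw [hasDerivAt_iff_isLittleO, Asymptotics.isLittleO_iff]
  intro C hC
  obtain ⟨η, hη, hFη⟩ := Metric.eventually_nhds_iff.1
    (hF.eventually (Metric.closedBall_mem_nhds (F a (p a)) hC))
  filter_upwards [hint, Metric.ball_mem_nhds a hη, hp (Metric.ball_mem_nhds (p a) hη)]
    with u hu_int hu hpu
  have hnear : ∀ y ∈ Ι a u, ‖F y (p u) - F a (p a)‖ ≤ C := fun y hy => by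
    have hya : dist y a < η := (abs_sub_left_of_mem_uIcc (uIoc_subset_uIcc hy)).trans_lt hu
    have hd : dist (y, p u) (a, p a) < η := by rw [Prod.dist_eq]; exact max_lt hya hpu
    simpa [dist_eq_norm] using hFη hd
  calc ‖(∫ y in a..u, F y (p u)) - (∫ y in a..a, F y (p a)) - (u - a) • F a (p a)‖
      = ‖∫ y in a..u, (F y (p u) - F a (p a))‖ := by
        rw [intervalIntegral.integral_same, sub_zero,
          intervalIntegral.integral_sub hu_int intervalIntegrable_const,
          intervalIntegral.integral_const]
    _ ≤ C * |u - a| := intervalIntegral.norm_integral_le_of_norm_le_const hnear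
    _ = C * ‖u - a‖ := by rw [Real.norm_eq_abs]

lemma PhiI_eq_intervalIntegral (q : ℝ) (n : ℕ) (g : ℝ → ℝ) {u : ℝ} (hu : 0 ≤ u) (w : ℝ) :
    PhiI q n g u w = ∫ y in (0 : ℝ)..u, phiR q n (w / g y) := by
  rw [intervalIntegral.integral_of_le hu, integral_Ioc_eq_integral_Ioo, PhiI]

lemma abs_div_le_abs_div_of_le {a b c : ℝ} (hc : 0 < c) (hcb : c ≤ b) : |a / b| ≤ |a| / c := by
  rw [abs_div, abs_of_pos (hc.trans_le hcb)]
  gcongr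

section PhiI

variable {q : ℝ} (hq0 : 0 ≤ q) (hq1 : q < 1) {g : ℝ → ℝ} {c : ℝ}
include hq0 hq1

lemma continuousOn_phiR_div (n : ℕ) {s : Set ℝ} (hg : ContinuousOn g s) (hgc : ∀ y ∈ s, c ≤ g y)
    {w : ℝ} (hw : |w| < c) : ContinuousOn (fun y => phiR q n (w / g y)) s := by
  have hc : 0 < c := (abs_nonneg w).trans_lt hw
  have hdiv : ContinuousOn (fun y => w / g y) s :=
    continuousOn_const.div₀ hg fun y hy => (hc.trans_le (hgc y hy)).ne'
  exact fun y hy => ContinuousAt.comp_continuousWithinAt (g := phiR q n)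
    (continuousAt_phiR hq0 hq1 n ((abs_div_le_abs_div_of_le hc (hgc y hy)).trans_lt
      ((div_lt_one hc).2 hw))) (hdiv y hy)

lemma integrableOn_phiR_div_s7 (n : ℕ) {x : ℝ} (hg : ContinuousOn g (Ioo 0 x))
    (hgc : ∀ y ∈ Ioo 0 x, c ≤ g y) {w : ℝ} (hw : |w| < c) :
    IntegrableOn (fun y => phiR q n (w / g y)) (Ioo 0 x) := by
  have hc : 0 < c := (abs_nonneg w).trans_lt hw
  refine IntegrableOn.of_bound measure_Ioo_lt_top
    ((continuousOn_phiR_div hq0 hq1 n hg hgc hw).aestronglyMeasurable measurableSet_Ioo)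
    (phiR q n (|w| / c)) (ae_restrict_of_forall_mem measurableSet_Ioo fun y hy => ?_)
  exact abs_phiR_le hq0 hq1 n (abs_div_le_abs_div_of_le hc (hgc y hy)) ((div_lt_one hc).2 hw)

lemma hasDerivAt_PhiI (n : ℕ) {x w₀ : ℝ} (hg : ContinuousOn g (Ioo 0 x))
    (hgc : ∀ y ∈ Ioo 0 x, c ≤ g y) (hw₀ : 0 < w₀) (hw₀c : w₀ < c) :
    HasDerivAt (PhiI q n g x) (PhiI q (n + 1) g x w₀ / w₀) w₀ := by
  have hc : 0 < c := hw₀.trans hw₀c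
  obtain ⟨c', hw₀c', hc'c⟩ := exists_between hw₀c
  have hs : Ioo (w₀ / 2) c' ∈ 𝓝 w₀ := Ioo_mem_nhds (by linarith) hw₀c'
  have habs : ∀ w ∈ Ioo (w₀ / 2) c', |w| = w := fun w hw => abs_of_pos (by linarith [hw.1])
  have hsc : ∀ w ∈ Ioo (w₀ / 2) c', |w| < c := fun w hw => by rw [habs w hw]; linarith [hw.2]
  have habs₀ : |w₀| < c := by rwa [abs_of_pos hw₀]
  have key := hasDerivAt_integral_of_dominated_loc_of_deriv_le (μ := volume.restrict (Ioo 0 x))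
    (F := fun w y => phiR q n (w / g y)) (F' := fun w y => phiR q (n + 1) (w / g y) / w)
    (bound := fun _ => phiR q (n + 1) (c' / c) / (w₀ / 2)) hs
    (eventually_of_mem hs fun w hw =>
      (integrableOn_phiR_div_s7 hq0 hq1 n hg hgc (hsc w hw)).aestronglyMeasurable)
    (integrableOn_phiR_div_s7 hq0 hq1 n hg hgc habs₀)
    ((integrableOn_phiR_div_s7 hq0 hq1 (n + 1) hg hgc habs₀).div_const w₀).aestronglyMeasurable
    (ae_restrict_of_forall_mem measurableSet_Ioo fun y hy w hw => ?_) (integrable_const _)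
    (ae_restrict_of_forall_mem measurableSet_Ioo fun y hy w hw => ?_)
  · rw [PhiI, ← integral_div]
    exact key.2
  · have hwg : |w / g y| ≤ c' / c :=
      (abs_div_le_abs_div_of_le hc (hgc y hy)).trans (by rw [habs w hw]; gcongr; exact hw.2.le)
    have hφ := abs_phiR_le hq0 hq1 (n + 1) hwg ((div_lt_one hc).2 hc'c)
    rw [Real.norm_eq_abs, abs_div, habs w hw]
    exact div_le_div₀ ((abs_nonneg _).trans hφ) hφ (by linarith) hw.1.le
  · have hgy : 0 < g y := hc.trans_le (hgc y hy)
    exact hasDerivAt_phiR_div hq0 hq1 n (by linarith [hw.1]) hgy.ne'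
      ((abs_div_le_abs_div_of_le hc (hgc y hy)).trans_lt ((div_lt_one hc).2 (hsc w hw)))

lemma hasDerivAt_PhiI_comp (n : ℕ) {w : ℝ → ℝ} {b x₀ w' : ℝ} (hg : ContinuousOn g (Ioo 0 b))
    (hgc : ∀ y ∈ Ioo 0 b, c ≤ g y) (hx₀ : x₀ ∈ Ioo 0 b) (hw : HasDerivAt w w' x₀)
    (hw₀ : 0 < w x₀) (hw₀c : w x₀ < c) :
    HasDerivAt (fun u => PhiI q n g u (w u))
      (phiR q n (w x₀ / g x₀) + PhiI q (n + 1) g x₀ (w x₀) / w x₀ * w') x₀ := by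
  have hc : 0 < c := hw₀.trans hw₀c
  have hsub : Ioo 0 x₀ ⊆ Ioo 0 b := Ioo_subset_Ioo_right hx₀.2.le
  have hslice := (hasDerivAt_PhiI hq0 hq1 n (hg.mono hsub) (fun y hy => hgc y (hsub hy)) hw₀
    hw₀c).comp x₀ hw
  have hdiv : ContinuousAt (fun z : ℝ × ℝ => z.2 / g z.1) (x₀, w x₀) :=
    continuousAt_snd.div₀ ((hg.continuousAt (isOpen_Ioo.mem_nhds hx₀)).comp continuousAt_fst)
      (hc.trans_le (hgc x₀ hx₀)).ne'
  have hF : ContinuousAt (Function.uncurry fun y v => phiR q n (v / g y)) (x₀, w x₀) :=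
    ContinuousAt.comp (g := phiR q n) (continuousAt_phiR hq0 hq1 n
      ((abs_div_le_abs_div_of_le hc (hgc x₀ hx₀)).trans_lt
        ((div_lt_one hc).2 (by rwa [abs_of_pos hw₀])))) hdiv
  have hII : ∀ {v u : ℝ}, |v| < c → u ∈ Ioo 0 b →
      IntervalIntegrable (fun y => phiR q n (v / g y)) volume 0 u := fun hv hu =>
    (intervalIntegrable_iff_integrableOn_Ioo_of_le hu.1.le).2
      ((integrableOn_phiR_div_s7 hq0 hq1 n hg hgc hv).mono_set (Ioo_subset_Ioo_right hu.2.le))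
  have hev : ∀ᶠ u in 𝓝 x₀, u ∈ Ioo 0 b ∧ |w u| < c :=
    (isOpen_Ioo.eventually_mem hx₀).and
      (hw.continuousAt.abs.eventually_lt continuousAt_const (by rwa [abs_of_pos hw₀]))
  have hupper := hasDerivAt_intervalIntegral_upper_of_continuousAt hF hw.continuousAt
    (hev.mono fun u hu => (hII hu.2 hx₀).symm.trans (hII hu.2 hu.1))
  refine (hupper.add hslice).congr_of_eventuallyEq (hev.mono fun u hu => ?_)
  simp only [Pi.add_apply, Function.comp_apply, PhiI_eq_intervalIntegral q n g hu.1.1.le,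
    PhiI_eq_intervalIntegral q n g hx₀.1.le]
  rw [add_comm, intervalIntegral.integral_add_adjacent_intervals (hII hu.2 hx₀)
    ((hII hu.2 hx₀).symm.trans (hII hu.2 hu.1))]

end PhiI

theorem stmt_7_general (q : ℝ) (hq : q ∈ Set.Ioo (0:ℝ) 1) (X : ℝ)
    (ξ : ℝ → ℝ) (hcont : ContinuousOn ξ (Set.Ioo 0 X))
    (m M : ℝ) (hbound : ∀ y ∈ Set.Ioo 0 X, m ≤ ξ y ∧ ξ y ≤ M)
    (τ₀ x₀ : ℝ) (hx₀ : x₀ ∈ Set.Ioo 0 X)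
    -- the implicit root function `ω(τ,x)` on a neighborhood `U` of `(τ₀,x₀)`
    (ω : ℝ → ℝ → ℝ) (U : Set (ℝ × ℝ)) (hU : U ∈ nhds (τ₀, x₀))
    (hval : ∀ p ∈ U, 0 < ω p.1 p.2 ∧
      ω p.1 p.2 < essInf ξ (volume.restrict (Set.Ioo 0 p.2)))
    (heq : ∀ p ∈ U, p.1 * ω p.1 p.2 = PhiI q 2 ξ p.2 (ω p.1 p.2))
    -- partial derivatives of ω at (τ₀,x₀)
    (hdτ : DifferentiableAt ℝ (fun t => ω t x₀) τ₀)
    (hdx : DifferentiableAt ℝ (fun u => ω τ₀ u) x₀)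
    -- the limit shape `𝓗(τ,x) = τ·ω(τ,x) − Φ₁(ω(τ,x)∣x)`
    (H : ℝ → ℝ → ℝ)
    (hHdef : ∀ t u : ℝ, H t u = t * ω t u - PhiI q 1 ξ u (ω t u)) :
    HasDerivAt (fun t => H t x₀) (ω τ₀ x₀) τ₀ ∧
    HasDerivAt (fun u => H τ₀ u) (-phiR q 1 (ω τ₀ x₀ / ξ x₀)) x₀ ∧
    deriv (fun u => H τ₀ u) x₀
      = -phiR q 1 ((1 / ξ x₀) * deriv (fun t => H t x₀) τ₀) := by
  obtain rfl : H = fun t u => t * ω t u - PhiI q 1 ξ u (ω t u) := funext₂ hHdef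
  obtain ⟨hq0, hq1⟩ := hq
  have hp₀ : (τ₀, x₀) ∈ U := mem_of_mem_nhds hU
  obtain ⟨hw₀, hw₀E⟩ := hval _ hp₀
  obtain ⟨c, b, hw₀c, hx₀b, hbX, hξc⟩ :=
    exists_forall_le_of_lt_essInf hcont (fun y hy => (hbound y hy).1) hx₀ hw₀E
  have hξb : ContinuousOn ξ (Ioo 0 b) := hcont.mono (Ioo_subset_Ioo_right hbX)
  have hτ₀ : PhiI q 2 ξ x₀ (ω τ₀ x₀) / ω τ₀ x₀ = τ₀ := by
    rw [← heq _ hp₀, mul_div_cancel_right₀ _ hw₀.ne']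
  have hsub : Ioo 0 x₀ ⊆ Ioo 0 b := Ioo_subset_Ioo_right hx₀b.le
  have hw : HasDerivAt (PhiI q 1 ξ x₀) τ₀ (ω τ₀ x₀) := by
    simpa only [hτ₀] using hasDerivAt_PhiI hq0.le hq1 1 (hξb.mono hsub)
      (fun y hy => hξc y (hsub hy)) hw₀ hw₀c
  have hx : HasDerivAt (fun u => PhiI q 1 ξ u (ω τ₀ u))
      (phiR q 1 (ω τ₀ x₀ / ξ x₀) + τ₀ * deriv (fun u => ω τ₀ u) x₀) x₀ := by
    simpa only [hτ₀] using hasDerivAt_PhiI_comp hq0.le hq1 1 hξb hξc ⟨hx₀.1, hx₀b⟩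
      hdx.hasDerivAt hw₀ hw₀c
  have hHτ : HasDerivAt (fun t => t * ω t x₀ - PhiI q 1 ξ x₀ (ω t x₀)) (ω τ₀ x₀) τ₀ := by
    have h := ((hasDerivAt_id' τ₀).fun_mul hdτ.hasDerivAt).fun_sub (hw.comp τ₀ hdτ.hasDerivAt)
    exact h.congr_deriv (by ring)
  have hHx : HasDerivAt (fun u => τ₀ * ω τ₀ u - PhiI q 1 ξ u (ω τ₀ u))
      (-phiR q 1 (ω τ₀ x₀ / ξ x₀)) x₀ :=
    ((hdx.hasDerivAt.const_mul τ₀).fun_sub hx).congr_deriv (by ring)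
  refine ⟨hHτ, hHx, ?_⟩
  rw [hHx.deriv, hHτ.deriv, one_div_mul_eq_div]

theorem stmt_7 (q : ℝ) (hq : q ∈ Set.Ioo (0:ℝ) 1) (X : ℝ) (hX : 0 < X)
    (ξ : ℝ → ℝ) (hcont : ContinuousOn ξ (Set.Ioo 0 X))
    (m M : ℝ) (hm : 0 < m) (hbound : ∀ y ∈ Set.Ioo 0 X, m ≤ ξ y ∧ ξ y ≤ M)
    (τ₀ x₀ : ℝ) (hx₀ : x₀ ∈ Set.Ioo 0 X)
    -- the implicit root function `ω(τ,x)` on a neighborhood `U` of `(τ₀,x₀)`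
    (ω : ℝ → ℝ → ℝ) (U : Set (ℝ × ℝ)) (hU : U ∈ nhds (τ₀, x₀))
    (hval : ∀ p ∈ U, 0 < ω p.1 p.2 ∧
      ω p.1 p.2 < essInf ξ (volume.restrict (Set.Ioo 0 p.2)))
    (heq : ∀ p ∈ U, p.1 * ω p.1 p.2 = PhiI q 2 ξ p.2 (ω p.1 p.2))
    -- partial derivatives of ω at (τ₀,x₀)
    (hdτ : DifferentiableAt ℝ (fun t => ω t x₀) τ₀)
    (hdx : DifferentiableAt ℝ (fun u => ω τ₀ u) x₀)
    -- the limit shape `𝓗(τ,x) = τ·ω(τ,x) − Φ₁(ω(τ,x)∣x)`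
    (H : ℝ → ℝ → ℝ)
    (hHdef : ∀ t u : ℝ, H t u = t * ω t u - PhiI q 1 ξ u (ω t u)) :
    HasDerivAt (fun t => H t x₀) (ω τ₀ x₀) τ₀ ∧
    HasDerivAt (fun u => H τ₀ u) (-phiR q 1 (ω τ₀ x₀ / ξ x₀)) x₀ ∧
    deriv (fun u => H τ₀ u) x₀
      = -phiR q 1 ((1 / ξ x₀) * deriv (fun t => H t x₀) τ₀) :=
  stmt_7_general q hq X ξ hcont m M hbound τ₀ x₀ hx₀ ω U hU hval heq hdτ hdx H hHdef
end

section
/- Fix q ∈ (0,1), real numbers 0 < a < h, and an angle φ ∈ (0, π/2). Then there exist constants c > 0 and c′ > 0 such that for every point w of the contour C_{a,φ} := {a + t·e^{iφ} : t ≥ 0} ∪ {a + t·e^{−iφ} : t ≥ 0} one has Re φ̂₀(w/h) ≤ c·log|w| + c′. -/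
/-- `φ̂₀(z) = Σ_{i≥0} qⁱz/(1−qⁱz)`, the analytic continuation of `φ₀`. -/
noncomputable def phiHat (q : ℝ) (z : ℂ) : ℂ :=
  ∑' i : ℕ, (q : ℂ) ^ i * z / (1 - (q : ℂ) ^ i * z)

/-!
Scaling the contour by any `s ∈ [0, 1/h]` keeps it at distance at least
`δ = (1 - a/h)|sin φ|/2` from `1`: near the vertex the real part stays below `1 - (1 - a/h)/2`,
and away from it the imaginary part is at least `δ`. So each term `qⁱz/(1 - qⁱz)` of `φ̂₀(z)`,
`z = w/h`, has real part at most `min(1, qⁱ‖z‖)/δ`. The first `N ≈ log ‖z‖ / log (1/q)` terms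
contribute at most `N/δ` and the remaining ones a geometric tail, whence the logarithmic bound.
-/

open Real

lemma re_div_one_sub_le_min {δ : ℝ} (hδ : 0 < δ) {u : ℂ} (hu : δ ≤ ‖1 - u‖) :
    (u / (1 - u)).re ≤ min (1 / δ) (‖u‖ / δ) := by
  have hu0 : 1 - u ≠ 0 := norm_pos_iff.mp (hδ.trans_le hu)
  refine le_min ?_ ?_
  · have hsplit : u / (1 - u) = 1 / (1 - u) - 1 := by field_simp; ring
    calc (u / (1 - u)).re = (1 / (1 - u)).re - 1 := by simp [hsplit]
      _ ≤ ‖1 / (1 - u)‖ := by linarith [Complex.re_le_norm (1 / (1 - u))]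
      _ ≤ 1 / δ := by rw [norm_div, norm_one]; gcongr
  · calc (u / (1 - u)).re ≤ ‖u‖ / ‖1 - u‖ := norm_div u (1 - u) ▸ Complex.re_le_norm _
      _ ≤ ‖u‖ / δ := by gcongr

lemma exists_pow_mul_le_one {q : ℝ} (hq0 : 0 < q) (hq1 : q < 1) {M : ℝ} (hM : 0 ≤ M) :
    ∃ N : ℕ, q ^ N * M ≤ 1 ∧ (N : ℝ) ≤ max 0 (log M) / (-log q) + 1 := by
  have hL : 0 < -log q := neg_pos.mpr (log_neg hq0 hq1)
  set N := ⌈max 0 (log M) / (-log q)⌉₊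
  refine ⟨N, ?_, (Nat.ceil_lt_add_one (by positivity)).le⟩
  obtain rfl | hM := hM.eq_or_lt
  · simp
  have hN : log M ≤ N * -log q :=
    calc log M ≤ max 0 (log M) := le_max_right _ _
      _ ≤ N * -log q := (div_le_iff₀ hL).mp (Nat.le_ceil _)
  rw [← log_nonpos_iff (by positivity), log_mul (by positivity) hM.ne', log_pow]
  linarith

theorem phiHat_re_le {q : ℝ} (hq0 : 0 < q) (hq1 : q < 1) {z : ℂ} {δ : ℝ} (hδ : 0 < δ)
    (hz : ∀ i : ℕ, δ ≤ ‖1 - (q : ℂ) ^ i * z‖) :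
    (phiHat q z).re ≤ (max 0 (log ‖z‖) / (-log q) + 1 + (1 - q)⁻¹) / δ := by
  obtain ⟨N, hqN, hN⟩ := exists_pow_mul_le_one hq0 hq1 (norm_nonneg z)
  set f : ℕ → ℂ := fun i => (q : ℂ) ^ i * z / (1 - (q : ℂ) ^ i * z)
  have hnorm : ∀ i, ‖(q : ℂ) ^ i * z‖ = q ^ i * ‖z‖ := fun i => by
    rw [norm_mul, norm_pow, Complex.norm_real, norm_of_nonneg hq0.le]
  have hre : ∀ i, (f i).re ≤ min (1 / δ) (q ^ i * ‖z‖ / δ) := fun i =>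
    hnorm i ▸ re_div_one_sub_le_min hδ (hz i)
  have hgeom : Summable fun i : ℕ => q ^ i / δ :=
    (summable_geometric_of_lt_one hq0.le hq1).div_const δ
  have hf : Summable f := by
    refine .of_norm_bounded (hgeom.mul_left ‖z‖) fun i => ?_
    rw [norm_div, hnorm]
    calc q ^ i * ‖z‖ / ‖1 - (q : ℂ) ^ i * z‖ ≤ q ^ i * ‖z‖ / δ := by gcongr; exact hz i
      _ = ‖z‖ * (q ^ i / δ) := by ring
  have hfre : Summable fun i => (f i).re := (Complex.hasSum_re hf.hasSum).summable
  have hhead : ∑ i ∈ Finset.range N, (f i).re ≤ N / δ := by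
    calc ∑ i ∈ Finset.range N, (f i).re ≤ ∑ i ∈ Finset.range N, 1 / δ :=
          Finset.sum_le_sum fun i _ => (hre i).trans (min_le_left _ _)
      _ = N / δ := by rw [Finset.sum_const, Finset.card_range, nsmul_eq_mul, mul_one_div]
  have htail : ∑' i, (f (i + N)).re ≤ (1 - q)⁻¹ / δ := by
    calc ∑' i, (f (i + N)).re ≤ ∑' i, q ^ i / δ := by
          refine ((summable_nat_add_iff N).mpr hfre).tsum_le_tsum (fun i => ?_) hgeom
          calc (f (i + N)).re ≤ q ^ (i + N) * ‖z‖ / δ := (hre _).trans (min_le_right _ _)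
            _ = q ^ i * (q ^ N * ‖z‖) / δ := by ring
            _ ≤ q ^ i / δ := by gcongr; exact mul_le_of_le_one_right (by positivity) hqN
      _ = (1 - q)⁻¹ / δ := by rw [tsum_div_const, tsum_geometric_of_lt_one hq0.le hq1]
  calc (phiHat q z).re = ∑ i ∈ Finset.range N, (f i).re + ∑' i, (f (i + N)).re := by
        rw [phiHat, Complex.re_tsum hf, hfre.sum_add_tsum_nat_add]
    _ ≤ (N + (1 - q)⁻¹) / δ := by rw [add_div]; exact add_le_add hhead htail
    _ ≤ _ := by gcongr

def contour (a φ : ℝ) : Set ℂ :=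
  {w | ∃ t : ℝ, 0 ≤ t ∧
    (w = (a : ℂ) + (t : ℂ) * Complex.exp (Complex.I * (φ : ℂ)) ∨
     w = (a : ℂ) + (t : ℂ) * Complex.exp (-(Complex.I * (φ : ℂ))))}

lemma exists_re_im_of_mem_contour {a φ : ℝ} {w : ℂ} (hw : w ∈ contour a φ) :
    ∃ t : ℝ, 0 ≤ t ∧ w.re = a + t * cos φ ∧ |w.im| = t * |sin φ| := by
  obtain ⟨t, ht, rfl | rfl⟩ := hw <;>
  · refine ⟨t, ht, by simp [Complex.exp_re], ?_⟩
    simp [Complex.exp_im, abs_mul, abs_of_nonneg ht]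

lemma le_norm_of_mem_contour {a φ : ℝ} (hφ : 0 ≤ cos φ) {w : ℂ} (hw : w ∈ contour a φ) :
    a ≤ ‖w‖ := by
  obtain ⟨t, ht, hre, -⟩ := exists_re_im_of_mem_contour hw
  calc a ≤ w.re := by rw [hre]; nlinarith
    _ ≤ ‖w‖ := Complex.re_le_norm w

lemma le_norm_one_sub_mul_of_mem_contour {a h φ : ℝ} (ha : 0 ≤ a) {w : ℂ} (hw : w ∈ contour a φ)
    {s : ℝ} (hs0 : 0 ≤ s) (hsh : s ≤ h⁻¹) :
    (1 - a / h) * |sin φ| / 2 ≤ ‖1 - s * w‖ := by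
  obtain ⟨t, ht, hre, him⟩ := exists_re_im_of_mem_contour hw
  have hst : 0 ≤ s * t := mul_nonneg hs0 ht
  rcases le_or_gt (s * t) ((1 - a / h) / 2) with hnear | hfar
  · have hsa : s * a ≤ a / h := by rw [div_eq_mul_inv, mul_comm a]; gcongr
    calc (1 - a / h) * |sin φ| / 2 ≤ (1 - a / h) / 2 := by nlinarith [abs_sin_le_one φ]
      _ ≤ (1 - s * w).re := by
          rw [Complex.sub_re, Complex.one_re, Complex.re_ofReal_mul, hre]
          nlinarith [cos_le_one φ]
      _ ≤ ‖1 - s * w‖ := Complex.re_le_norm _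
  · calc (1 - a / h) * |sin φ| / 2 ≤ s * t * |sin φ| := by nlinarith [abs_nonneg (sin φ)]
      _ = |(1 - s * w).im| := by
          rw [Complex.sub_im, Complex.one_im, Complex.im_ofReal_mul, zero_sub, abs_neg, abs_mul,
            abs_of_nonneg hs0, him, mul_assoc]
      _ ≤ ‖1 - s * w‖ := Complex.abs_im_le_norm _

lemma max_zero_log_div_le {a h x : ℝ} (ha : 0 < a) (hax : a ≤ x) (hh : h ≠ 0) :
    max 0 (log (x / h)) ≤ log x + (|log a| + |log h|) := by
  have hlog : log a ≤ log x := log_le_log ha hax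
  rw [log_div (ha.trans_le hax).ne' hh]
  exact max_le (by linarith [neg_abs_le (log a), abs_nonneg (log h)])
    (by linarith [neg_abs_le (log h), abs_nonneg (log a)])

theorem stmt_16 (q : ℝ) (hq : q ∈ Set.Ioo (0:ℝ) 1)
    (a h : ℝ) (ha : 0 < a) (hah : a < h)
    (φ : ℝ) (hφ : φ ∈ Set.Ioo 0 (Real.pi / 2)) :
    ∃ c > (0:ℝ), ∃ c' > (0:ℝ), ∀ w : ℂ,
      (∃ t : ℝ, 0 ≤ t ∧
        (w = (a : ℂ) + (t : ℂ) * Complex.exp (Complex.I * (φ : ℂ)) ∨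
         w = (a : ℂ) + (t : ℂ) * Complex.exp (-(Complex.I * (φ : ℂ))))) →
      (phiHat q (w / (h : ℂ))).re ≤ c * Real.log ‖w‖ + c' := by
  obtain ⟨hq0, hq1⟩ := hq
  obtain ⟨hφ0, hφ1⟩ := hφ
  have hh : 0 < h := ha.trans hah
  have hsin : 0 < |sin φ| := abs_pos.mpr (sin_pos_of_pos_of_lt_pi hφ0 (by linarith [pi_pos])).ne'
  have hah' : 0 < 1 - a / h := sub_pos.mpr ((div_lt_one hh).mpr hah)
  set δ := (1 - a / h) * |sin φ| / 2
  have hδ : 0 < δ := by positivity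
  have hL : 0 < -log q := neg_pos.mpr (log_neg hq0 hq1)
  have hq' : 0 < (1 - q)⁻¹ := inv_pos.mpr (sub_pos.mpr hq1)
  refine ⟨1 / (δ * -log q), by positivity,
    (|log a| + |log h|) / (δ * -log q) + (1 + (1 - q)⁻¹) / δ, by positivity, fun w hw => ?_⟩
  have hz : ∀ i : ℕ, δ ≤ ‖1 - (q : ℂ) ^ i * (w / h)‖ := fun i => by
    have hqi : q ^ i / h ≤ h⁻¹ := by
      rw [div_eq_mul_inv]; exact mul_le_of_le_one_left (by positivity) (pow_le_one₀ hq0.le hq1.le)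
    convert le_norm_one_sub_mul_of_mem_contour ha.le hw (by positivity) hqi using 3
    push_cast; ring
  calc (phiHat q (w / h)).re ≤ (max 0 (log ‖w / h‖) / (-log q) + 1 + (1 - q)⁻¹) / δ :=
        phiHat_re_le hq0 hq1 hδ hz
    _ ≤ ((log ‖w‖ + (|log a| + |log h|)) / (-log q) + 1 + (1 - q)⁻¹) / δ := by
        gcongr
        rw [norm_div, Complex.norm_real, norm_of_nonneg hh.le]
        exact max_zero_log_div_le ha
          (le_norm_of_mem_contour (cos_nonneg_of_mem_Icc ⟨by linarith, hφ1.le⟩) hw) hh.ne'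
    _ = _ := by field_simp; ring
end

section
/- Fix q ∈ (0,1), c ∈ (0,1) and S ∈ (0,1). Then Σ_{j=1}^∞ j · c^j · ( (S;q)_j / (q;q)_j ) · ( (c;q)_∞ / (cS;q)_∞ ) = φ₀(c) − φ₀(cS). (This identifies the mean particle density of the translation invariant stationary distribution φ^{hc}_{c,s²} of the homogeneous half-continuous vertex model, with S = s².) -/
/-- The finite q-Pochhammer symbol `(z;q)_m = Π_{i=0}^{m-1} (1 - z qⁱ)`. -/
noncomputable def qPoch (q z : ℝ) (m : ℕ) : ℝ :=
  ∏ i ∈ Finset.range m, (1 - z * q ^ i)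

/-- The infinite q-Pochhammer symbol `(z;q)_∞ = Π_{i=0}^∞ (1 - z qⁱ)`. -/
noncomputable def qPochInf (q z : ℝ) : ℝ :=
  ∏' i : ℕ, (1 - z * q ^ i)

/-! Write `a_j = (S;q)_j/(q;q)_j`, `H(x) = Σ a_j x^j` and `M(x) = Σ j a_j x^j`. The recurrence
`a_{j+1} (1 - q^{j+1}) = a_j (1 - S q^j)` turns into functional equations relating the values of
`H` and `M` at `x` and at `q x`. Iterating the one for `H` along `q^N c → 0` gives the q-binomial
theorem `H(c) = (cS;q)_∞ / (c;q)_∞`, so the sum to compute is `M(c)/H(c)`. Since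
`φ₀(x) - φ₀(q x) = x/(1 - x)`, the same equations show that `M/H - (φ₀(x) - φ₀(xS))` is invariant
under `x ↦ q x`; it is continuous at `0`, where it vanishes, hence it vanishes everywhere. -/

open Filter Topology Set

section QPochhammer

variable {q z : ℝ}

lemma one_sub_mul_pow_pos (hq0 : 0 ≤ q) (hq1 : q ≤ 1) (hz : z < 1) (i : ℕ) :
    0 < 1 - z * q ^ i := by
  have h0 : 0 ≤ q ^ i := pow_nonneg hq0 i
  have h1 : q ^ i ≤ 1 := pow_le_one₀ hq0 hq1
  have : z * q ^ i < 1 := by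
    rcases le_or_gt z 0 with hz0 | hz0
    · linarith [mul_nonpos_of_nonpos_of_nonneg hz0 h0]
    · exact (mul_le_of_le_one_right hz0.le h1).trans_lt hz
  linarith

lemma one_sub_mul_pow_mem_Icc (hq0 : 0 ≤ q) (hq1 : q ≤ 1) (hz0 : 0 ≤ z) (hz1 : z ≤ 1) (i : ℕ) :
    1 - z * q ^ i ∈ Icc 0 1 := by
  have h0 : 0 ≤ z * q ^ i := mul_nonneg hz0 (pow_nonneg hq0 i)
  have h1 : z * q ^ i ≤ 1 := mul_le_one₀ hz1 (pow_nonneg hq0 i) (pow_le_one₀ hq0 hq1)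
  constructor <;> linarith

lemma qPoch_succ (q z : ℝ) (m : ℕ) : qPoch q z (m + 1) = qPoch q z m * (1 - z * q ^ m) :=
  Finset.prod_range_succ _ m

lemma qPoch_pos (hq0 : 0 ≤ q) (hq1 : q ≤ 1) (hz : z < 1) (m : ℕ) : 0 < qPoch q z m :=
  Finset.prod_pos fun i _ => one_sub_mul_pow_pos hq0 hq1 hz i

lemma qPoch_mem_Icc (hq0 : 0 ≤ q) (hq1 : q ≤ 1) (hz0 : 0 ≤ z) (hz1 : z ≤ 1) (m : ℕ) :
    qPoch q z m ∈ Icc 0 1 :=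
  ⟨Finset.prod_nonneg fun i _ => (one_sub_mul_pow_mem_Icc hq0 hq1 hz0 hz1 i).1,
    Finset.prod_le_one (fun i _ => (one_sub_mul_pow_mem_Icc hq0 hq1 hz0 hz1 i).1)
      fun i _ => (one_sub_mul_pow_mem_Icc hq0 hq1 hz0 hz1 i).2⟩

lemma summable_mul_pow (hq0 : 0 ≤ q) (hq1 : q < 1) (z : ℝ) : Summable fun i : ℕ => z * q ^ i :=
  (summable_geometric_of_lt_one hq0 hq1).mul_left z

lemma tendsto_qPoch (hq0 : 0 ≤ q) (hq1 : q < 1) (z : ℝ) :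
    Tendsto (qPoch q z) atTop (𝓝 (qPochInf q z)) := by
  have h := Real.multipliable_one_add_of_summable (summable_mul_pow hq0 hq1 (-z))
  simp only [neg_mul, ← sub_eq_add_neg] at h
  exact h.hasProd.tendsto_prod_nat

lemma qPochInf_pos (hq0 : 0 ≤ q) (hq1 : q < 1) (hz : z < 1) : 0 < qPochInf q z := by
  have h := Real.summable_log_one_add_of_summable (summable_mul_pow hq0 hq1 (-z))
  simp only [neg_mul, ← sub_eq_add_neg] at h
  rw [qPochInf, ← Real.rexp_tsum_eq_tprod (one_sub_mul_pow_pos hq0 hq1.le hz) h]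
  exact Real.exp_pos _

lemma qPochInf_le_qPoch (hq0 : 0 ≤ q) (hq1 : q < 1) (hz0 : 0 ≤ z) (hz1 : z ≤ 1) (m : ℕ) :
    qPochInf q z ≤ qPoch q z m := by
  refine Antitone.le_of_tendsto (antitone_nat_of_succ_le fun n => ?_) (tendsto_qPoch hq0 hq1 z) m
  rw [qPoch_succ]
  exact mul_le_of_le_one_right (qPoch_mem_Icc hq0 hq1.le hz0 hz1 n).1
    (one_sub_mul_pow_mem_Icc hq0 hq1.le hz0 hz1 n).2

end QPochhammer

section Coefficients

variable {q S : ℝ}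

noncomputable def qBinomialCoeff (q S : ℝ) (j : ℕ) : ℝ := qPoch q S j / qPoch q q j

lemma qBinomialCoeff_zero (q S : ℝ) : qBinomialCoeff q S 0 = 1 := by
  simp [qBinomialCoeff, qPoch]

lemma qBinomialCoeff_succ_mul (hq0 : 0 ≤ q) (hq1 : q < 1) (j : ℕ) :
    qBinomialCoeff q S (j + 1) * (1 - q ^ (j + 1)) = qBinomialCoeff q S j * (1 - S * q ^ j) := by
  have h1 : qPoch q q j ≠ 0 := (qPoch_pos hq0 hq1.le hq1 j).ne'
  have h2 : 1 - q ^ (j + 1) ≠ 0 := by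
    rw [pow_succ']; exact (one_sub_mul_pow_pos hq0 hq1.le hq1 j).ne'
  rw [qBinomialCoeff, qBinomialCoeff, qPoch_succ, qPoch_succ, ← pow_succ']
  field_simp

lemma qBinomialCoeff_nonneg (hq0 : 0 ≤ q) (hq1 : q < 1) (hS0 : 0 ≤ S) (hS1 : S ≤ 1) (j : ℕ) :
    0 ≤ qBinomialCoeff q S j :=
  div_nonneg (qPoch_mem_Icc hq0 hq1.le hS0 hS1 j).1 (qPoch_pos hq0 hq1.le hq1 j).le

lemma qBinomialCoeff_le (hq0 : 0 ≤ q) (hq1 : q < 1) (hS0 : 0 ≤ S) (hS1 : S ≤ 1) (j : ℕ) :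
    qBinomialCoeff q S j ≤ (qPochInf q q)⁻¹ := by
  rw [← one_div]
  exact div_le_div₀ zero_le_one (qPoch_mem_Icc hq0 hq1.le hS0 hS1 j).2 (qPochInf_pos hq0 hq1 hq1)
    (qPochInf_le_qPoch hq0 hq1 hq0 hq1.le j)

end Coefficients

section PowerSeries

variable {b : ℕ → ℝ} {r x : ℝ}

lemma abs_mul_pow_le (hx : |x| ≤ r) (n : ℕ) : |b n * x ^ n| ≤ |b n| * r ^ n := by
  rw [abs_mul, abs_pow]
  exact mul_le_mul_of_nonneg_left (pow_le_pow_left₀ (abs_nonneg x) hx n) (abs_nonneg _)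

lemma summable_mul_pow_of_summable_abs (hb : Summable fun n => |b n| * r ^ n) (hx : |x| ≤ r) :
    Summable fun n => b n * x ^ n :=
  hb.of_norm_bounded (abs_mul_pow_le hx)

lemma continuousAt_tsum_mul_pow_zero (hr : 0 < r) (hb : Summable fun n => |b n| * r ^ n) :
    ContinuousAt (fun x => ∑' n, b n * x ^ n) 0 :=
  (continuousOn_tsum (fun n => by fun_prop) hb fun n x hx => abs_mul_pow_le (abs_le.mpr hx) n
    ).continuousAt (Icc_mem_nhds (neg_lt_zero.mpr hr) hr)

lemma tsum_mul_pow_zero (b : ℕ → ℝ) : ∑' n, b n * 0 ^ n = b 0 := by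
  rw [tsum_eq_single 0 fun n hn => by simp [hn]]
  simp

lemma HasSum.eq_of_shift {G : Type*} [AddCommGroup G] [TopologicalSpace G]
    [IsTopologicalAddGroup G] [T2Space G] {f g : ℕ → G} {a b : G} (hf : HasSum f a)
    (hg : HasSum g b) (h0 : f 0 = 0) (hfg : ∀ j, f (j + 1) = g j) : a = b := by
  have h : HasSum (fun j => f (j + 1)) b := by simpa only [hfg] using hg
  rw [hasSum_nat_add_iff 1] at h
  simpa [h0] using hf.unique h

end PowerSeries

section QBinomialSeries

variable {q S r x : ℝ}

noncomputable def qBinomialSeries (q S x : ℝ) : ℝ := ∑' j : ℕ, qBinomialCoeff q S j * x ^ j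

noncomputable def qBinomialMoment (q S x : ℝ) : ℝ :=
  ∑' j : ℕ, (j : ℝ) * qBinomialCoeff q S j * x ^ j

lemma summable_abs_qBinomialCoeff_mul_pow (hq0 : 0 ≤ q) (hq1 : q < 1) (hS0 : 0 ≤ S) (hS1 : S ≤ 1)
    (hr0 : 0 ≤ r) (hr1 : r < 1) : Summable fun j => |qBinomialCoeff q S j| * r ^ j := by
  refine ((summable_geometric_of_lt_one hr0 hr1).mul_left (qPochInf q q)⁻¹).of_nonneg_of_le
    (fun j => by positivity) fun j => ?_
  rw [abs_of_nonneg (qBinomialCoeff_nonneg hq0 hq1 hS0 hS1 j)]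
  exact mul_le_mul_of_nonneg_right (qBinomialCoeff_le hq0 hq1 hS0 hS1 j) (pow_nonneg hr0 j)

lemma summable_abs_natCast_mul_qBinomialCoeff_mul_pow (hq0 : 0 ≤ q) (hq1 : q < 1) (hS0 : 0 ≤ S)
    (hS1 : S ≤ 1) (hr0 : 0 ≤ r) (hr1 : r < 1) :
    Summable fun j : ℕ => |(j : ℝ) * qBinomialCoeff q S j| * r ^ j := by
  have hgeom := summable_pow_mul_geometric_of_norm_lt_one 1 (r := r)
    (by rwa [Real.norm_eq_abs, abs_of_nonneg hr0])
  refine (hgeom.mul_left (qPochInf q q)⁻¹).of_nonneg_of_le (fun j => by positivity) fun j => ?_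
  rw [abs_mul, Nat.abs_cast, abs_of_nonneg (qBinomialCoeff_nonneg hq0 hq1 hS0 hS1 j), pow_one]
  have := qBinomialCoeff_le hq0 hq1 hS0 hS1 j
  have : 0 ≤ (j : ℝ) * r ^ j := by positivity
  nlinarith

lemma hasSum_qBinomialSeries (hq0 : 0 ≤ q) (hq1 : q < 1) (hS0 : 0 ≤ S) (hS1 : S ≤ 1)
    (hx : |x| < 1) : HasSum (fun j => qBinomialCoeff q S j * x ^ j) (qBinomialSeries q S x) :=
  (summable_mul_pow_of_summable_abs
    (summable_abs_qBinomialCoeff_mul_pow hq0 hq1 hS0 hS1 (abs_nonneg x) hx) le_rfl).hasSum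

lemma hasSum_qBinomialMoment (hq0 : 0 ≤ q) (hq1 : q < 1) (hS0 : 0 ≤ S) (hS1 : S ≤ 1)
    (hx : |x| < 1) :
    HasSum (fun j : ℕ => (j : ℝ) * qBinomialCoeff q S j * x ^ j) (qBinomialMoment q S x) :=
  (summable_mul_pow_of_summable_abs
    (summable_abs_natCast_mul_qBinomialCoeff_mul_pow hq0 hq1 hS0 hS1 (abs_nonneg x) hx)
    le_rfl).hasSum

lemma qBinomialSeries_zero (q S : ℝ) : qBinomialSeries q S 0 = 1 := by
  rw [qBinomialSeries, tsum_mul_pow_zero, qBinomialCoeff_zero]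

lemma qBinomialMoment_zero (q S : ℝ) : qBinomialMoment q S 0 = 0 := by
  rw [qBinomialMoment, tsum_mul_pow_zero, Nat.cast_zero, zero_mul]

lemma continuousAt_qBinomialSeries_zero (hq0 : 0 ≤ q) (hq1 : q < 1) (hS0 : 0 ≤ S)
    (hS1 : S ≤ 1) : ContinuousAt (qBinomialSeries q S) 0 :=
  continuousAt_tsum_mul_pow_zero one_half_pos
    (summable_abs_qBinomialCoeff_mul_pow hq0 hq1 hS0 hS1 one_half_pos.le one_half_lt_one)

lemma continuousAt_qBinomialMoment_zero (hq0 : 0 ≤ q) (hq1 : q < 1) (hS0 : 0 ≤ S)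
    (hS1 : S ≤ 1) : ContinuousAt (qBinomialMoment q S) 0 :=
  continuousAt_tsum_mul_pow_zero one_half_pos
    (summable_abs_natCast_mul_qBinomialCoeff_mul_pow hq0 hq1 hS0 hS1 one_half_pos.le
      one_half_lt_one)

lemma one_le_qBinomialSeries (hq0 : 0 ≤ q) (hq1 : q < 1) (hS0 : 0 ≤ S) (hS1 : S ≤ 1)
    (hx0 : 0 ≤ x) (hx1 : x < 1) : 1 ≤ qBinomialSeries q S x := by
  have h := le_hasSum (hasSum_qBinomialSeries hq0 hq1 hS0 hS1 (by rwa [abs_of_nonneg hx0])) 0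
    fun j _ => mul_nonneg (qBinomialCoeff_nonneg hq0 hq1 hS0 hS1 j) (pow_nonneg hx0 j)
  rwa [qBinomialCoeff_zero, pow_zero, one_mul] at h

lemma abs_mul_lt_one (hq0 : 0 ≤ q) (hq1 : q < 1) (hx : |x| < 1) : |q * x| < 1 := by
  rw [abs_mul, abs_of_nonneg hq0]
  nlinarith [abs_nonneg x]

lemma qBinomialSeries_functional_eq (hq0 : 0 ≤ q) (hq1 : q < 1) (hS0 : 0 ≤ S) (hS1 : S ≤ 1)
    (hx : |x| < 1) :
    (1 - x) * qBinomialSeries q S x = (1 - x * S) * qBinomialSeries q S (q * x) := by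
  have hH := hasSum_qBinomialSeries hq0 hq1 hS0 hS1 hx
  have hH' := hasSum_qBinomialSeries hq0 hq1 hS0 hS1 (abs_mul_lt_one hq0 hq1 hx)
  have h := (hH.sub hH').eq_of_shift ((hH.mul_left x).sub (hH'.mul_left (x * S))) (by simp)
    fun j => by linear_combination x ^ (j + 1) * qBinomialCoeff_succ_mul (S := S) hq0 hq1 j
  linear_combination h

lemma qBinomialMoment_functional_eq (hq0 : 0 ≤ q) (hq1 : q < 1) (hS0 : 0 ≤ S) (hS1 : S ≤ 1)
    (hx : |x| < 1) :
    qBinomialMoment q S x - qBinomialMoment q S (q * x) =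
      x * (qBinomialMoment q S x + qBinomialSeries q S x)
        - x * S * (qBinomialMoment q S (q * x) + qBinomialSeries q S (q * x)) := by
  have hqx := abs_mul_lt_one hq0 hq1 hx
  have hH := hasSum_qBinomialSeries hq0 hq1 hS0 hS1 hx
  have hH' := hasSum_qBinomialSeries hq0 hq1 hS0 hS1 hqx
  have hM := hasSum_qBinomialMoment hq0 hq1 hS0 hS1 hx
  have hM' := hasSum_qBinomialMoment hq0 hq1 hS0 hS1 hqx
  refine (hM.sub hM').eq_of_shift (((hM.add hH).mul_left x).sub ((hM'.add hH').mul_left (x * S)))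
    (by simp) fun j => ?_
  push_cast
  linear_combination ((j : ℝ) + 1) * x ^ (j + 1) * qBinomialCoeff_succ_mul (S := S) hq0 hq1 j

end QBinomialSeries

section Phi

variable {q r x : ℝ}

lemma phiR_zero_eq (q x : ℝ) : phiR q 0 x = x * ∑' k : ℕ, (1 - q ^ (k + 1))⁻¹ * x ^ k := by
  rw [phiR, ← tsum_mul_left]
  exact tsum_congr fun k => by ring

lemma summable_abs_inv_one_sub_pow_mul_pow (hq0 : 0 ≤ q) (hq1 : q < 1) (hr0 : 0 ≤ r)
    (hr1 : r < 1) : Summable fun k : ℕ => |(1 - q ^ (k + 1))⁻¹| * r ^ k := by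
  refine ((summable_geometric_of_lt_one hr0 hr1).mul_left (1 - q)⁻¹).of_nonneg_of_le
    (fun k => by positivity) fun k => ?_
  have hqk : q ^ (k + 1) ≤ q := pow_le_of_le_one hq0 hq1.le k.succ_ne_zero
  rw [abs_of_pos (inv_pos.mpr (by linarith))]
  exact mul_le_mul_of_nonneg_right (inv_anti₀ (by linarith) (by linarith)) (pow_nonneg hr0 k)

lemma phiR_zero_sub_phiR_zero_mul (hq0 : 0 ≤ q) (hq1 : q < 1) (hx : |x| < 1) :
    phiR q 0 x - phiR q 0 (q * x) = x / (1 - x) := by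
  have hasSum_coeff := fun y (hy : |y| < 1) => (summable_mul_pow_of_summable_abs
    (summable_abs_inv_one_sub_pow_mul_pow hq0 hq1 (abs_nonneg y) hy) le_rfl).hasSum
  have h := ((hasSum_coeff x hx).sub ((hasSum_coeff _ (abs_mul_lt_one hq0 hq1 hx)).mul_left q)).unique
    ((hasSum_geometric_of_abs_lt_one hx).congr_fun fun k => by
      have : 1 - q ^ (k + 1) ≠ 0 := sub_ne_zero.mpr (pow_lt_one₀ hq0 hq1 k.succ_ne_zero).ne'
      field_simp
      ring)
  rw [phiR_zero_eq, phiR_zero_eq, div_eq_mul_inv, ← h]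
  ring

lemma phiR_zero_zero (q : ℝ) : phiR q 0 0 = 0 := by
  rw [phiR_zero_eq, zero_mul]

lemma continuousAt_phiR_zero (hq0 : 0 ≤ q) (hq1 : q < 1) : ContinuousAt (phiR q 0) 0 := by
  rw [funext (phiR_zero_eq q)]
  exact continuousAt_id.mul (continuousAt_tsum_mul_pow_zero one_half_pos
    (summable_abs_inv_one_sub_pow_mul_pow hq0 hq1 one_half_pos.le one_half_lt_one))

end Phi

section Iteration

variable {q c S : ℝ} {u : ℝ → ℝ}

lemma pow_mul_mem_Icc (hq0 : 0 ≤ q) (hq1 : q ≤ 1) (hc : 0 ≤ c) (N : ℕ) : q ^ N * c ∈ Icc 0 c :=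
  ⟨by positivity, mul_le_of_le_one_left hc (pow_le_one₀ hq0 hq1)⟩

lemma tendsto_pow_mul_atTop_nhds_zero (hq0 : 0 ≤ q) (hq1 : q < 1) (c : ℝ) :
    Tendsto (fun N : ℕ => q ^ N * c) atTop (𝓝 0) := by
  simpa using (tendsto_pow_atTop_nhds_zero_of_lt_one hq0 hq1).mul_const c

lemma eq_apply_zero_of_apply_mul_eq {α : Type*} [TopologicalSpace α] [T2Space α] {v : ℝ → α}
    (hq0 : 0 ≤ q) (hq1 : q < 1) (hc : 0 ≤ c) (hv : ∀ x ∈ Icc 0 c, v (q * x) = v x)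
    (hv0 : ContinuousAt v 0) : v c = v 0 := by
  have hN : ∀ N : ℕ, v (q ^ N * c) = v c := by
    intro N
    induction N with
    | zero => simp
    | succ N ih => rw [pow_succ', mul_assoc, hv _ (pow_mul_mem_Icc hq0 hq1.le hc N), ih]
  refine tendsto_nhds_unique ?_ (hv0.tendsto.comp (tendsto_pow_mul_atTop_nhds_zero hq0 hq1 c))
  exact tendsto_const_nhds.congr fun N => (hN N).symm

lemma mul_qPochInf_eq_of_functional_eq (hq0 : 0 ≤ q) (hq1 : q < 1) (hc : 0 ≤ c)
    (hu : ∀ x ∈ Icc 0 c, (1 - x) * u x = (1 - x * S) * u (q * x)) (hu0 : ContinuousAt u 0) :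
    u c * qPochInf q c = u 0 * qPochInf q (c * S) := by
  have hN : ∀ N : ℕ, u c * qPoch q c N = u (q ^ N * c) * qPoch q (c * S) N := by
    intro N
    induction N with
    | zero => simp [qPoch]
    | succ N ih =>
      rw [qPoch_succ, qPoch_succ, ← mul_assoc, ih, pow_succ', mul_assoc q]
      linear_combination qPoch q (c * S) N * hu _ (pow_mul_mem_Icc hq0 hq1.le hc N)
  refine tendsto_nhds_unique (((tendsto_qPoch hq0 hq1 c).const_mul (u c)).congr hN) ?_
  exact (hu0.tendsto.comp (tendsto_pow_mul_atTop_nhds_zero hq0 hq1 c)).mul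
    (tendsto_qPoch hq0 hq1 (c * S))

end Iteration

section Density

variable {q S c x : ℝ}

theorem qBinomialSeries_mul_qPochInf (hq0 : 0 ≤ q) (hq1 : q < 1) (hS0 : 0 ≤ S) (hS1 : S ≤ 1)
    (hc0 : 0 ≤ c) (hc1 : c < 1) :
    qBinomialSeries q S c * qPochInf q c = qPochInf q (c * S) := by
  have h := mul_qPochInf_eq_of_functional_eq hq0 hq1 hc0
    (fun x hx => qBinomialSeries_functional_eq hq0 hq1 hS0 hS1
      (by rw [abs_of_nonneg hx.1]; exact hx.2.trans_lt hc1))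
    (continuousAt_qBinomialSeries_zero hq0 hq1 hS0 hS1)
  rwa [qBinomialSeries_zero, one_mul] at h

noncomputable def meanDefect (q S x : ℝ) : ℝ :=
  qBinomialMoment q S x / qBinomialSeries q S x - (phiR q 0 x - phiR q 0 (x * S))

lemma meanDefect_mul_left (hq0 : 0 ≤ q) (hq1 : q < 1) (hS0 : 0 ≤ S) (hS1 : S ≤ 1)
    (hx0 : 0 ≤ x) (hx1 : x < 1) : meanDefect q S (q * x) = meanDefect q S x := by
  have hx : |x| < 1 := by rwa [abs_of_nonneg hx0]
  have hxS : |x * S| < 1 := by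
    rw [abs_of_nonneg (mul_nonneg hx0 hS0)]; nlinarith
  have hqx1 : q * x < 1 := by nlinarith
  have hH := qBinomialSeries_functional_eq hq0 hq1 hS0 hS1 hx
  have hM := qBinomialMoment_functional_eq hq0 hq1 hS0 hS1 hx
  have hφ := phiR_zero_sub_phiR_zero_mul hq0 hq1 hx
  have hφS := phiR_zero_sub_phiR_zero_mul hq0 hq1 hxS
  have hH0 := one_le_qBinomialSeries hq0 hq1 hS0 hS1 hx0 hx1
  have hH1 := one_le_qBinomialSeries hq0 hq1 hS0 hS1 (mul_nonneg hq0 hx0) hqx1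
  have h1 : 1 - x ≠ 0 := by linarith
  have h2 : 1 - x * S ≠ 0 := by nlinarith
  rw [← mul_assoc] at hφS
  have key : qBinomialMoment q S (q * x) / qBinomialSeries q S (q * x) =
      qBinomialMoment q S x / qBinomialSeries q S x - x / (1 - x) + x * S / (1 - x * S) := by
    field_simp
    linear_combination ((1 - x * S) * qBinomialMoment q S (q * x)
      - x * S * qBinomialSeries q S (q * x)) * hH - (1 - x * S) * qBinomialSeries q S (q * x) * hM
  unfold meanDefect
  linear_combination key + hφ - hφS

lemma meanDefect_zero (q S : ℝ) : meanDefect q S 0 = 0 := by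
  rw [meanDefect, qBinomialMoment_zero, qBinomialSeries_zero, zero_mul, phiR_zero_zero]
  norm_num

lemma continuousAt_meanDefect_zero (hq0 : 0 ≤ q) (hq1 : q < 1) (hS0 : 0 ≤ S) (hS1 : S ≤ 1) :
    ContinuousAt (meanDefect q S) 0 := by
  have hφ := continuousAt_phiR_zero hq0 hq1
  have hφS : ContinuousAt (fun x => phiR q 0 (x * S)) 0 :=
    hφ.comp_of_eq (continuousAt_id.mul continuousAt_const) (zero_mul S)
  exact ((continuousAt_qBinomialMoment_zero hq0 hq1 hS0 hS1).div
    (continuousAt_qBinomialSeries_zero hq0 hq1 hS0 hS1)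
    (by rw [qBinomialSeries_zero]; exact one_ne_zero)).sub (hφ.sub hφS)

theorem qBinomialMoment_div_qBinomialSeries (hq0 : 0 ≤ q) (hq1 : q < 1) (hS0 : 0 ≤ S)
    (hS1 : S ≤ 1) (hc0 : 0 ≤ c) (hc1 : c < 1) :
    qBinomialMoment q S c / qBinomialSeries q S c = phiR q 0 c - phiR q 0 (c * S) := by
  have h := eq_apply_zero_of_apply_mul_eq hq0 hq1 hc0
    (fun x hx => meanDefect_mul_left hq0 hq1 hS0 hS1 hx.1 (hx.2.trans_lt hc1))
    (continuousAt_meanDefect_zero hq0 hq1 hS0 hS1)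
  rwa [meanDefect_zero, meanDefect, sub_eq_zero] at h

end Density

theorem stmt_19 (q c S : ℝ) (hq : q ∈ Set.Ioo (0:ℝ) 1) (hc : c ∈ Set.Ioo (0:ℝ) 1)
    (hS : S ∈ Set.Ioo (0:ℝ) 1) :
    ∑' j : ℕ, (j : ℝ) * c ^ j * (qPoch q S j / qPoch q q j) *
        (qPochInf q c / qPochInf q (c * S))
      = phiR q 0 c - phiR q 0 (c * S) := by
  obtain ⟨hq0, hq1⟩ := hq
  obtain ⟨hc0, hc1⟩ := hc
  obtain ⟨hS0, hS1⟩ := hS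
  have hbinom := qBinomialSeries_mul_qPochInf hq0.le hq1 hS0.le hS1.le hc0.le hc1
  have hratio : qPochInf q c / qPochInf q (c * S) = (qBinomialSeries q S c)⁻¹ := by
    rw [← hbinom, div_mul_cancel_right₀ (qPochInf_pos hq0.le hq1 hc1).ne']
  calc ∑' j : ℕ, (j : ℝ) * c ^ j * (qPoch q S j / qPoch q q j) *
          (qPochInf q c / qPochInf q (c * S))
      = qBinomialMoment q S c * (qPochInf q c / qPochInf q (c * S)) := by
        rw [qBinomialMoment, ← tsum_mul_right]
        exact tsum_congr fun j => by rw [qBinomialCoeff]; ring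
    _ = qBinomialMoment q S c / qBinomialSeries q S c := by rw [hratio, div_eq_mul_inv]
    _ = phiR q 0 c - phiR q 0 (c * S) :=
        qBinomialMoment_div_qBinomialSeries hq0.le hq1 hS0.le hS1.le hc0.le hc1
end
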